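/- arXiv:2509.11432 — 12 statements merged into one kernel-verified Lean document; each statement's English description precedes it below -/
import Mathlib

section
/- There exists a continuous function f : ℝ → ℝ with f(0) = 0 that is 2-subadditive but not 3-subadditive. -/
namespace TSNA

/-- distance from `x` to the nearest integer -/
noncomputable def d (x : ℝ) : ℝ := |x - round x|

lemma d_nonneg (x : ℝ) : 0 ≤ d x := abs_nonneg _

lemma d_le (x : ℝ) (n : ℤ) : d x ≤ |x - n| := by
  rcases eq_or_ne n (round x) with h | h
  · rw [d, h]
  · have h1 : |x - round x| ≤ 1 / 2 := abs_sub_round x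
    have h2 : (1 : ℝ) ≤ |(round x : ℝ) - n| := by
      have hne : round x - n ≠ 0 := sub_ne_zero.mpr (Ne.symm h)
      have := Int.one_le_abs hne
      calc (1 : ℝ) = ((1 : ℤ) : ℝ) := by norm_num
        _ ≤ ((|round x - n| : ℤ) : ℝ) := by exact_mod_cast this
        _ = |(round x : ℝ) - n| := by push_cast [Int.cast_abs]; ring_nf
    have h3 : |(round x : ℝ) - n| ≤ |(round x : ℝ) - x| + |x - n| := abs_sub_le _ _ _
    have h4 : |(round x : ℝ) - x| = |x - round x| := abs_sub_comm _ _
    rw [d]; linarith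
 
lemma d_subadd (x y : ℝ) : d (x + y) ≤ d x + d y := by
  have h := d_le (x + y) (round x + round y)
  have h2 : |x + y - ((round x + round y : ℤ) : ℝ)|
      = |(x - round x) + (y - round y)| := by push_cast; ring_nf
  have h3 : |(x - round x) + (y - round y)| ≤ |x - round x| + |y - round y| := abs_add_le _ _
  rw [h2] at h; simp only [d] at h ⊢; linarith

lemma d_two (x : ℝ) : d (2 * x) ≤ 2 * d x := by
  have h := d_le (2 * x) (2 * round x)
  have h2 : |2 * x - ((2 * round x : ℤ) : ℝ)| = 2 * |x - round x| := by
    push_cast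
    rw [show (2:ℝ) * x - 2 * (round x : ℝ) = 2 * (x - round x) by ring, abs_mul]
    norm_num
  rw [h2] at h; simp only [d] at h ⊢; linarith

lemma d_shift (x u : ℝ) : d u ≤ d (x + u) + d x := by
  have h := d_le u (round (x + u) - round x)
  have h2 : |u - ((round (x + u) - round x : ℤ) : ℝ)|
      = |(x + u - round (x + u)) - (x - round x)| := by push_cast; ring_nf
  have h3 : |(x + u - round (x + u)) - (x - round x)|
      ≤ |x + u - round (x + u)| + |x - round x| := abs_sub _ _
  rw [h2] at h; simp only [d] at h ⊢; linarith

lemma d_lipschitz : LipschitzWith 1 d := by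
  refine LipschitzWith.of_dist_le_mul fun x y => ?_
  simp only [NNReal.coe_one, one_mul, Real.dist_eq]
  rw [abs_sub_le_iff]
  constructor
  · have h := d_le x (round y)
    have h2 : |x - (round y : ℝ)| ≤ |x - y| + |y - round y| := abs_sub_le _ _ _
    rw [d, d]; rw [d] at h; linarith
  · have h := d_le y (round x)
    have h2 : |y - (round x : ℝ)| ≤ |y - x| + |x - round x| := abs_sub_le _ _ _
    have h3 : |y - x| = |x - y| := abs_sub_comm _ _
    rw [d, d]; rw [d] at h; linarith

/-- distance-type function to `3/2 + 2ℤ` -/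
noncomputable def e (x : ℝ) : ℝ := 2 * d (x / 2 - 3 / 4)

lemma e_nonneg (x : ℝ) : 0 ≤ e x := by
  have := d_nonneg (x / 2 - 3 / 4); rw [e]; linarith

lemma e_lb (x y : ℝ) : e y - 2 * d x ≤ e (2 * x + y) := by
  have harg : (2 * x + y) / 2 - 3 / 4 = x + (y / 2 - 3 / 4) := by ring
  have h := d_shift x (y / 2 - 3 / 4)
  rw [e, e, harg]; linarith

lemma d_add_e (x : ℝ) : 1 / 2 ≤ d x + e x := by
  set m := round (x / 2 - 3 / 4) with hm
  have h1 : e x = |x - (3 / 2 + 2 * (m : ℝ))| := by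
    rw [e, d, ← hm]
    rw [show x / 2 - 3 / 4 - (m:ℝ) = (x - (3/2 + 2*(m:ℝ)))/2 by ring, abs_div]
    rw [abs_of_pos (by norm_num : (0:ℝ) < 2)]
    ring
  have h2 : d x = |x - round x| := rfl
  have h3 : |x - round x| + |x - (3 / 2 + 2 * (m : ℝ))|
      ≥ |(3 / 2 + 2 * (m : ℝ)) - round x| := by
    have := abs_sub_le (3 / 2 + 2 * (m : ℝ)) x (round x)
    have h4 : |3 / 2 + 2 * (m : ℝ) - x| = |x - (3 / 2 + 2 * (m : ℝ))| := abs_sub_comm _ _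
    linarith
  have h5 : (1 : ℝ) / 2 ≤ |(3 / 2 + 2 * (m : ℝ)) - round x| := by
    have hne : 2 * (round x) - 4 * m - 3 ≠ 0 := by omega
    have := Int.one_le_abs hne
    have hc : (1 : ℝ) ≤ |((2 * round x - 4 * m - 3 : ℤ) : ℝ)| := by
      rw [← Int.cast_abs]; exact_mod_cast this
    have he : |((2 * round x - 4 * m - 3 : ℤ) : ℝ)| = 2 * |(3 / 2 + 2 * (m : ℝ)) - round x| := by
      push_cast
      rw [show ((2:ℝ) * round x - 4 * m - 3) = -(2 * ((3/2 + 2*(m:ℝ)) - round x)) by ring,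
        abs_neg, abs_mul]
      norm_num
    rw [he] at hc; linarith
  rw [h2, h1]; linarith

/-- the 2-subadditive, not 3-subadditive function -/
noncomputable def g (x : ℝ) : ℝ := min (4 * d x) 1 + max (1 - 4 * e x) 0

lemma g_nonneg (x : ℝ) : 0 ≤ g x := by
  have h1 : (0:ℝ) ≤ min (4 * d x) 1 := le_min (by have := d_nonneg x; linarith) (by norm_num)
  have h2 : (0:ℝ) ≤ max (1 - 4 * e x) 0 := le_max_right _ _
  rw [g]; linarith

lemma g_ge_min (x : ℝ) : min (4 * d x) 1 ≤ g x := by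
  have h2 : (0:ℝ) ≤ max (1 - 4 * e x) 0 := le_max_right _ _
  rw [g]; linarith

lemma g_key (z : ℝ) : 2 - 4 * e z ≤ g z := by
  rcases le_or_gt (e z) (1 / 4) with h | h
  · have hd : 1 / 4 ≤ d z := by have := d_add_e z; linarith
    have h1 : (1:ℝ) ≤ min (4 * d z) 1 := le_min (by linarith) le_rfl
    have h2 : 1 - 4 * e z ≤ max (1 - 4 * e z) 0 := le_max_left _ _
    rw [g]; linarith
  · have hd : 1 / 2 - e z ≤ d z := by have := d_add_e z; linarith
    have h1 : 2 - 4 * e z ≤ min (4 * d z) 1 := le_min (by linarith) (by linarith)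
    have := g_ge_min z
    linarith

lemma min_subadd (x y A : ℝ) (hA : d A ≤ 2 * d x + d y) :
    min (4 * d A) 1 ≤ 2 * min (4 * d x) 1 + min (4 * d y) 1 := by
  have hL1 : min (4 * d A) 1 ≤ 1 := min_le_right _ _
  have hL2 : min (4 * d A) 1 ≤ 4 * d A := min_le_left _ _
  rcases le_or_gt (1:ℝ) (4 * d x) with hx | hx
  · have h1 : min (4 * d x) 1 = 1 := min_eq_right hx
    have h2 : (0:ℝ) ≤ min (4 * d y) 1 := le_min (by have := d_nonneg y; linarith) (by norm_num)
    rw [h1]; linarith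
  · rcases le_or_gt (1:ℝ) (4 * d y) with hy | hy
    · have h1 : min (4 * d y) 1 = 1 := min_eq_right hy
      have h2 : (0:ℝ) ≤ min (4 * d x) 1 := le_min (by have := d_nonneg x; linarith) (by norm_num)
      rw [h1]; linarith
    · have h1 : min (4 * d x) 1 = 4 * d x := min_eq_left (by linarith)
      have h2 : min (4 * d y) 1 = 4 * d y := min_eq_left (by linarith)
      rw [h1, h2]; linarith

lemma g_two_subadd (x y : ℝ) : g (2 * x + y) ≤ 2 * g x + g y := by
  have hA : d (2 * x + y) ≤ 2 * d x + d y := by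
    have h1 := d_subadd (2 * x) y
    have h2 := d_two x
    linarith
  rcases le_or_gt (1 - 4 * e (2 * x + y)) 0 with hB | hB
  · -- no spike contribution at 2x+y
    have hmax : max (1 - 4 * e (2 * x + y)) 0 = 0 := max_eq_right hB
    have h1 := min_subadd x y (2 * x + y) hA
    have h2 := g_ge_min x
    have h3 := g_ge_min y
    rw [g, hmax]; linarith
  · -- spike contributes
    have hmax : max (1 - 4 * e (2 * x + y)) 0 = 1 - 4 * e (2 * x + y) :=
      max_eq_left (le_of_lt hB)
    have he : e (2 * x + y) < 1 / 4 := by linarith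
    have hd : 1 / 4 < d (2 * x + y) := by have := d_add_e (2 * x + y); linarith
    have hmin : min (4 * d (2 * x + y)) 1 = 1 := min_eq_right (by linarith)
    have hgA : g (2 * x + y) = 2 - 4 * e (2 * x + y) := by rw [g, hmax, hmin]; ring
    rcases le_or_gt (1 / 4 : ℝ) (d x) with hx | hx
    · have h1 : (1:ℝ) ≤ min (4 * d x) 1 := le_min (by linarith) le_rfl
      have h2 := g_ge_min x
      have h3 := g_nonneg y
      have h4 := e_nonneg (2 * x + y)
      rw [hgA]; linarith
    · have h1 : min (4 * d x) 1 = 4 * d x := min_eq_left (by linarith)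
      have h2 : 4 * d x ≤ g x := by rw [← h1]; exact g_ge_min x
      have h5 := e_lb x y
      have h6 := g_key y
      rw [hgA]; linarith

lemma g_continuous : Continuous g := by
  have hd : Continuous d := d_lipschitz.continuous
  have he : Continuous e := by
    rw [show e = fun x => 2 * d (x / 2 - 3 / 4) from rfl]
    fun_prop
  rw [show g = fun x => min (4 * d x) 1 + max (1 - 4 * e x) 0 from rfl]
  fun_prop

lemma g_at_half : g (1/2 : ℝ) = 1 := by
  have h1 : d (1/2 : ℝ) = 1/2 := by norm_num [d, round_eq, abs]
  have h2 : e (1/2 : ℝ) = 1 := by norm_num [e, d, round_eq, abs]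
  rw [g, h1, h2]; norm_num

lemma g_at_one : g (1 : ℝ) = 0 := by
  have h1 : d (1 : ℝ) = 0 := by norm_num [d, round_eq, abs]
  have h2 : e (1 : ℝ) = 1/2 := by norm_num [e, d, round_eq, abs]
  rw [g, h1, h2]; norm_num

lemma g_at_seven_half : g (7/2 : ℝ) = 2 := by
  have h1 : d (7/2 : ℝ) = 1/2 := by norm_num [d, round_eq, abs]
  have h2 : e (7/2 : ℝ) = 0 := by norm_num [e, d, round_eq, abs]
  rw [g, h1, h2]; norm_num

lemma g_at_zero : g 0 = 0 := by
  have h1 : d (0 : ℝ) = 0 := by norm_num [d, round_eq, abs]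
  have h2 : e (0 : ℝ) = 1/2 := by norm_num [e, d, round_eq, abs]
  rw [g, h1, h2]; norm_num

end TSNA

theorem exists_continuous_two_subadditive_not_three_subadditive :
    ∃ f : ℝ → ℝ, Continuous f ∧ f 0 = 0 ∧
      (∀ x y : ℝ, f (2 * x + y) ≤ 2 * f x + f y) ∧
      ¬ (∀ x y : ℝ, f (3 * x + y) ≤ 3 * f x + f y) := by
  refine ⟨TSNA.g, TSNA.g_continuous, TSNA.g_at_zero, TSNA.g_two_subadd, fun h => ?_⟩
  have := h 1 (1/2)
  rw [show (3:ℝ) * 1 + 1/2 = 7/2 by norm_num, TSNA.g_at_seven_half, TSNA.g_at_one,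
    TSNA.g_at_half] at this
  linarith
end

section
/- There exists a continuous function f : ℝ → ℝ with f(0) = 0 that is 2-subadditive but not 1-subadditive (i.e., not subadditive). In particular, S_1 ≠ S_2. -/
/-!
Let `d x` be the distance from `x` to `½ℤ`; on the circle `ℝ/ℤ` it is `‖2 • ↑x‖ / 2`, and working
there makes periodicity automatic. A function `F` with `0 ≤ F ≤ 1` that is `8`-Lipschitz and satisfies
`min 1 (16 d x) ≤ 2 F x` is `2`-subadditive: `F (2x + y) - F y` is at most `1`, and also at most
`16 d x` because `2x` lies within `2 d x` of an integer.
The function `min 1 (min (8 d x) (1/2 + 4 dist(x, 3/4 + ℤ)))` qualifies; its last term breaks the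
symmetry `x ↦ x + 1/2`, so that `F (3/4) = 1/2` and `F (1/2) = 0` while `F (5/4) = 1`.
-/

open scoped NNReal

theorem LipschitzWith.apply_nsmul_add_le {G : Type*} [SeminormedAddCommGroup G] {F : G → ℝ}
    {L : ℝ≥0} {M : ℝ} {n : ℕ} (hF : LipschitzWith L F) (hF_nonneg : ∀ a, 0 ≤ F a)
    (hF_le : ∀ a, F a ≤ M) (hmin : ∀ a, min M (L * ‖n • a‖) ≤ n * F a) (a b : G) :
    F (n • a + b) ≤ n * F a + F b := by
  have hlip : F (n • a + b) - F b ≤ L * ‖n • a‖ := by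
    have := hF.le_add_mul (n • a + b) b
    rw [dist_add_self_left] at this
    linarith
  have hbdd : F (n • a + b) - F b ≤ M := by linarith [hF_le (n • a + b), hF_nonneg b]
  linarith [(le_min hbdd hlip).trans (hmin a)]

namespace UnitAddCircle

noncomputable def twoSubadditiveProfile (θ : UnitAddCircle) : ℝ :=
  min (min 1 (4 * ‖2 • θ‖)) (1 / 2 + 4 * ‖θ - ((3 / 4 : ℝ) : UnitAddCircle)‖)

theorem twoSubadditiveProfile_nonneg (θ : UnitAddCircle) : 0 ≤ twoSubadditiveProfile θ := by
  unfold twoSubadditiveProfile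
  positivity

theorem twoSubadditiveProfile_le_one (θ : UnitAddCircle) : twoSubadditiveProfile θ ≤ 1 :=
  (min_le_left _ _).trans (min_le_left _ _)

theorem lipschitzWith_twoSubadditiveProfile : LipschitzWith 8 twoSubadditiveProfile := by
  have hdouble : LipschitzWith 8 fun θ : UnitAddCircle => 4 * ‖2 • θ‖ := by
    refine .of_le_add_mul 8 fun θ η => ?_
    have := norm_le_norm_add_norm_sub' (2 • θ) (2 • η)
    have : ‖2 • θ - 2 • η‖ ≤ 2 * dist θ η := by
      simpa [← nsmul_sub, dist_eq_norm] using norm_nsmul_le (a := θ - η) (n := 2)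
    push_cast; linarith
  have hshift : LipschitzWith 4 fun θ : UnitAddCircle =>
      1 / 2 + 4 * ‖θ - ((3 / 4 : ℝ) : UnitAddCircle)‖ := by
    refine .of_le_add_mul 4 fun θ η => ?_
    have := norm_sub_norm_le (θ - ((3 / 4 : ℝ) : UnitAddCircle))
      (η - ((3 / 4 : ℝ) : UnitAddCircle))
    rw [sub_sub_sub_cancel_right, ← dist_eq_norm θ η] at this
    push_cast; linarith
  exact (((LipschitzWith.const 1).min hdouble).min hshift).weaken (by norm_num)

theorem min_le_two_mul_twoSubadditiveProfile (θ : UnitAddCircle) :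
    min 1 (8 * ‖2 • θ‖) ≤ 2 * twoSubadditiveProfile θ := by
  unfold twoSubadditiveProfile
  rw [mul_min_of_nonneg _ _ zero_le_two, mul_min_of_nonneg _ _ zero_le_two]
  have := norm_nonneg (θ - ((3 / 4 : ℝ) : UnitAddCircle))
  refine le_min (le_min ?_ ?_) ?_ <;>
    linarith [min_le_left 1 (8 * ‖2 • θ‖), min_le_right 1 (8 * ‖2 • θ‖)]

theorem twoSubadditiveProfile_nsmul_two_add_le (θ η : UnitAddCircle) :
    twoSubadditiveProfile (2 • θ + η) ≤ 2 * twoSubadditiveProfile θ + twoSubadditiveProfile η := by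
  exact_mod_cast lipschitzWith_twoSubadditiveProfile.apply_nsmul_add_le
    twoSubadditiveProfile_nonneg twoSubadditiveProfile_le_one
    (by exact_mod_cast min_le_two_mul_twoSubadditiveProfile) θ η

theorem twoSubadditiveProfile_zero : twoSubadditiveProfile 0 = 0 :=
  le_antisymm ((min_le_left _ _).trans (by simp)) (twoSubadditiveProfile_nonneg 0)

theorem twoSubadditiveProfile_coe_half :
    twoSubadditiveProfile ((1 / 2 : ℝ) : UnitAddCircle) = 0 := by
  norm_num [twoSubadditiveProfile, ← AddCircle.coe_nsmul, norm_eq, round_eq]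
  positivity

theorem twoSubadditiveProfile_coe_three_quarters :
    twoSubadditiveProfile ((3 / 4 : ℝ) : UnitAddCircle) = 1 / 2 := by
  norm_num [twoSubadditiveProfile, ← AddCircle.coe_nsmul, norm_eq, round_eq]

theorem twoSubadditiveProfile_coe_five_quarters :
    twoSubadditiveProfile ((5 / 4 : ℝ) : UnitAddCircle) = 1 := by
  norm_num [twoSubadditiveProfile, ← AddCircle.coe_nsmul, ← AddCircle.coe_sub, norm_eq, round_eq]

end UnitAddCircle

open UnitAddCircle in
theorem exists_continuous_two_subadditive_not_subadditive :
    (∃ f : ℝ → ℝ, Continuous f ∧ f 0 = 0 ∧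
      (∀ x y : ℝ, f (2 * x + y) ≤ 2 * f x + f y) ∧
      ¬ (∀ x y : ℝ, f (x + y) ≤ f x + f y)) ∧
    ({f : ℝ → ℝ | Continuous f ∧ f 0 = 0 ∧ ∀ x y : ℝ, f (1 * x + y) ≤ 1 * f x + f y} ≠
      {f : ℝ → ℝ | Continuous f ∧ f 0 = 0 ∧ ∀ x y : ℝ, f (2 * x + y) ≤ 2 * f x + f y}) := by
  set f : ℝ → ℝ := fun x => twoSubadditiveProfile x
  have hcont : Continuous f :=
    lipschitzWith_twoSubadditiveProfile.continuous.comp (AddCircle.continuous_mk' 1)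
  have hzero : f 0 = 0 := by simp [f, twoSubadditiveProfile_zero]
  have htwo (x y : ℝ) : f (2 * x + y) ≤ 2 * f x + f y := by
    simpa [f, ← AddCircle.coe_nsmul] using twoSubadditiveProfile_nsmul_two_add_le x y
  have hnot : ¬ ∀ x y : ℝ, f (x + y) ≤ f x + f y := fun h => by
    have := h (3 / 4) (1 / 2)
    norm_num [f, twoSubadditiveProfile_coe_half, twoSubadditiveProfile_coe_three_quarters,
      twoSubadditiveProfile_coe_five_quarters] at this
  refine ⟨⟨f, hcont, hzero, htwo, hnot⟩, fun hS => hnot ?_⟩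
  have hf : f ∈ {f : ℝ → ℝ | Continuous f ∧ f 0 = 0 ∧ ∀ x y : ℝ, f (2 * x + y) ≤ 2 * f x + f y} :=
    ⟨hcont, hzero, htwo⟩
  rw [← hS] at hf
  simpa using hf.2.2
end

section
/- Let g : ℝ → ℝ be defined by g(x) = |x| + log(1 + |x|), and for a function w : ℝ → ℝ let Δ_w(x, y) := 2·w(x) + w(y) − w(2x + y). Then Δ_g(x, y) ≥ λ(|x|) for all (x, y) ∈ ℝ², where λ(z) = 2·log(1 + z) − log(1 + 2z). -/
/-!
With `s = 2|x|`, `t = |y|`, `c = |2x + y|`, the difference `Δ_g(x, y) - λ(|x|)` equals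
`(s + t - c) + (log (1 + s) + log (1 + t) - log (1 + c))`. The first bracket is nonnegative by the
triangle inequality, the second because `1 + c ≤ 1 + s + t ≤ (1 + s) (1 + t)`.
-/

open Real

lemma Real.log_one_add_le_add_of_le_add {c s t : ℝ} (hc : 0 ≤ c) (hs : 0 ≤ s) (ht : 0 ≤ t)
    (h : c ≤ s + t) : log (1 + c) ≤ log (1 + s) + log (1 + t) := by
  rw [← log_mul (by linarith) (by linarith)]
  exact log_le_log (by linarith) (by nlinarith)

lemma abs_two_mul_add_le (x y : ℝ) : |2 * x + y| ≤ 2 * |x| + |y| :=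
  (abs_add_le _ _).trans_eq (by rw [abs_mul, abs_two])

theorem Delta_g_ge_lambda (g : ℝ → ℝ) (hg : ∀ x : ℝ, g x = |x| + Real.log (1 + |x|))
    (Δg : ℝ → ℝ → ℝ) (hΔ : ∀ x y : ℝ, Δg x y = 2 * g x + g y - g (2 * x + y))
    (lam : ℝ → ℝ) (hlam : ∀ z : ℝ, lam z = 2 * Real.log (1 + z) - Real.log (1 + 2 * z)) :
    ∀ x y : ℝ, Δg x y ≥ lam |x| := by
  intro x y
  have htri := abs_two_mul_add_le x y
  have hlog := log_one_add_le_add_of_le_add (abs_nonneg _) (by positivity) (abs_nonneg y) htri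
  rw [hΔ, hg, hg, hg, hlam]
  linarith
end

section
/- Let g : ℝ → ℝ be defined by g(x) = |x| + log(1 + |x|), and for a function w : ℝ → ℝ let Δ_w(x, y) := 2·w(x) + w(y) − w(2x + y). Then Δ_g(x, y) ≥ log(9/8) for all (x, y) ∈ ℝ² with |x| ≥ 1/2. -/
/-! Writing `g x = h |x|` with `h t = t + log (1 + t)` increasing on `[0, ∞)`, the triangle
inequality `|2x + y| ≤ 2|x| + |y|` gives `Δ_g(x, y) ≥ 2 h(u) + h(v) - h(2u + v)` with `u = |x|`,
`v = |y|`. The linear parts cancel, leaving `log ((1 + u)² (1 + v) / (1 + 2u + v))`, and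
`(1 + u)² (1 + v) - 9/8 (1 + 2u + v)` is increasing in `v` and equals `(u - 1/2) (u + 1/4)` at
`v = 0`. -/

open Real Set

noncomputable def linLog (t : ℝ) : ℝ := t + log (1 + t)

lemma linLog_monotoneOn : MonotoneOn linLog (Ici 0) := fun s hs t _ hst =>
  add_le_add hst (log_le_log (by linarith [mem_Ici.mp hs]) (by linarith))

lemma MonotoneOn.apply_abs_two_mul_add_le {f : ℝ → ℝ} (hf : MonotoneOn f (Ici 0)) (x y : ℝ) :
    f |2 * x + y| ≤ f (2 * |x| + |y|) := by
  refine hf (mem_Ici.mpr (abs_nonneg _)) (mem_Ici.mpr (by positivity)) ?_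
  calc |2 * x + y| ≤ |2 * x| + |y| := abs_add_le _ _
    _ = 2 * |x| + |y| := by rw [abs_mul, abs_two]

lemma nine_div_eight_mul_le {u v : ℝ} (hu : 1 / 2 ≤ u) (hv : 0 ≤ v) :
    9 / 8 * (1 + 2 * u + v) ≤ (1 + u) ^ 2 * (1 + v) := by
  nlinarith [mul_nonneg (sub_nonneg.mpr hu) (by linarith : (0 : ℝ) ≤ u + 1 / 4),
    mul_nonneg hv (by nlinarith : (0 : ℝ) ≤ (1 + u) ^ 2 - 9 / 8)]

lemma log_nine_div_eight_le_linLog {u v : ℝ} (hu : 1 / 2 ≤ u) (hv : 0 ≤ v) :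
    log (9 / 8) ≤ 2 * linLog u + linLog v - linLog (2 * u + v) := by
  have hu1 : 0 < 1 + u := by linarith
  have hv1 : 0 < 1 + v := by linarith
  have huv : 0 < 1 + 2 * u + v := by linarith
  have hlog := log_le_log (by positivity) (nine_div_eight_mul_le hu hv)
  rw [log_mul (by norm_num) huv.ne', log_mul (by positivity) hv1.ne', log_pow] at hlog
  simp only [linLog, ← add_assoc]
  push_cast at hlog
  linarith

theorem Delta_g_ge_C (g : ℝ → ℝ) (hg : ∀ x : ℝ, g x = |x| + Real.log (1 + |x|))
    (Δg : ℝ → ℝ → ℝ) (hΔ : ∀ x y : ℝ, Δg x y = 2 * g x + g y - g (2 * x + y)) :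
    ∀ x y : ℝ, 1 / 2 ≤ |x| → Δg x y ≥ Real.log (9 / 8) := by
  intro x y hx
  have hg' : ∀ z, g z = linLog |z| := hg
  rw [hΔ, hg', hg', hg']
  linarith [log_nine_div_eight_le_linLog hx (abs_nonneg y),
    linLog_monotoneOn.apply_abs_two_mul_add_le x y]
end

section
/- Let g : ℝ → ℝ be defined by g(x) = |x| + log(1 + |x|), and for a function w : ℝ → ℝ let Δ_w(x, y) := 2·w(x) + w(y) − w(2x + y). Then Δ_g(x, y) ≥ (3/8)·x² for all (x, y) ∈ ℝ² with |x| ≤ 1/2. -/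
/-!
The linear part `2|x| + |y| - |2x + y|` of `Δ_g` is nonnegative by the triangle inequality, and
`log (1 + |·|)` is subadditive, so `Δ_g(x, y) ≥ 2 log (1 + |x|) - log (1 + 2|x|)`. This equals
`log ((1 + a)² / (1 + 2a))` with `a = |x|`, which `log z ≥ 1 - 1/z` bounds below by `a² / (1 + a)²`,
and `(1 + a)² ≤ 9/4 < 8/3` for `a ≤ 1/2`.
-/

open Real

lemma Real.log_one_add_abs_add_le (u v : ℝ) :
    log (1 + |u + v|) ≤ log (1 + |u|) + log (1 + |v|) := by
  rw [← log_mul (by positivity) (by positivity)]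
  apply log_le_log (by positivity)
  nlinarith [abs_add_le u v, abs_nonneg u, abs_nonneg v, mul_nonneg (abs_nonneg u) (abs_nonneg v)]

lemma Real.sq_div_one_add_sq_le_two_mul_log_one_add_sub {a : ℝ} (ha : 0 < 1 + 2 * a) :
    a ^ 2 / (1 + a) ^ 2 ≤ 2 * log (1 + a) - log (1 + 2 * a) := by
  have ha' : 0 < 1 + a := by nlinarith [sq_nonneg a]
  have hz : 0 < (1 + a) ^ 2 / (1 + 2 * a) := by positivity
  calc a ^ 2 / (1 + a) ^ 2 = 1 - ((1 + a) ^ 2 / (1 + 2 * a))⁻¹ := by field_simp; ring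
    _ ≤ log ((1 + a) ^ 2 / (1 + 2 * a)) := one_sub_inv_le_log_of_pos hz
    _ = 2 * log (1 + a) - log (1 + 2 * a) := by
      rw [log_div (by positivity) ha.ne', log_pow]; push_cast; ring

theorem Delta_g_ge_quadratic (g : ℝ → ℝ) (hg : ∀ x : ℝ, g x = |x| + Real.log (1 + |x|))
    (Δg : ℝ → ℝ → ℝ) (hΔ : ∀ x y : ℝ, Δg x y = 2 * g x + g y - g (2 * x + y)) :
    ∀ x y : ℝ, |x| ≤ 1 / 2 → Δg x y ≥ (3 / 8) * x ^ 2 := by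
  intro x y hx
  have h2x : |2 * x| = 2 * |x| := by rw [abs_mul, abs_two]
  have hlin := abs_add_le (2 * x) y
  have hsub := log_one_add_abs_add_le (2 * x) y
  have hlog := sq_div_one_add_sq_le_two_mul_log_one_add_sub (a := |x|) (by positivity)
  have hquad : 3 / 8 * x ^ 2 ≤ |x| ^ 2 / (1 + |x|) ^ 2 := by
    have hbound : (1 + |x|) ^ 2 ≤ 9 / 4 := by nlinarith [abs_nonneg x]
    rw [le_div_iff₀ (by positivity), sq_abs]
    nlinarith [sq_nonneg x]
  rw [h2x] at hlin hsub
  rw [hΔ, hg, hg, hg]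
  linarith
end

section
/- Fix reals μ, σ, α > 0 with α ≤ log(9/8) / (1 + 2·exp(−(μ/σ)²)). Define g(x) = |x| + log(1 + |x|), h(x) = exp(−((|x| − μ)/σ)²), and f(x) = g(x) + α·(h(x) − h(0)) for x ∈ ℝ. Then Δ_f(x, y) ≥ 0 for all (x, y) ∈ ℝ² with |x| ≥ 1/2, where Δ_f(x, y) := 2·f(x) + f(y) − f(2x + y). -/
theorem Delta_f_nonneg_region_A (μ σ α : ℝ) (hμ : 0 < μ) (hσ : 0 < σ) (hα : 0 < α)
    (hαle : α ≤ Real.log (9 / 8) / (1 + 2 * Real.exp (-(μ / σ) ^ 2)))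
    (g h f : ℝ → ℝ)
    (hg : ∀ x : ℝ, g x = |x| + Real.log (1 + |x|))
    (hh : ∀ x : ℝ, h x = Real.exp (-((|x| - μ) / σ) ^ 2))
    (hf : ∀ x : ℝ, f x = g x + α * (h x - h 0)) :
    ∀ x y : ℝ, 1 / 2 ≤ |x| → 0 ≤ 2 * f x + f y - f (2 * x + y) := by
  intro x y hx
  set a := |x| with ha
  set b := |y| with hb
  set c := |2 * x + y| with hc
  have hb0 : 0 ≤ b := abs_nonneg _
  have hc0 : 0 ≤ c := abs_nonneg _
  have ha0 : (1:ℝ)/2 ≤ a := hx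
  have hcab : c ≤ 2 * a + b := by
    have := abs_add_le (2 * x) y
    have h2 : |2 * x| = 2 * a := by rw [ha, abs_mul]; norm_num
    linarith [this, h2.le, h2.ge]
  -- log inequality
  have hprod : (9/8 : ℝ) * (1 + c) ≤ (1 + a)^2 * (1 + b) := by
    nlinarith [hcab, mul_nonneg hb0 (show (0:ℝ) ≤ a - 1/2 by linarith),
      mul_nonneg hb0 (mul_nonneg (show (0:ℝ) ≤ a by linarith) (show (0:ℝ) ≤ a by linarith)),
      mul_nonneg hb0 (show (0:ℝ) ≤ a by linarith)]
  have hlog : Real.log (9/8) + Real.log (1 + c) ≤ 2 * Real.log (1 + a) + Real.log (1 + b) := by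
    have h1 : Real.log ((9/8 : ℝ) * (1 + c)) ≤ Real.log ((1 + a)^2 * (1 + b)) :=
      Real.log_le_log (by positivity) hprod
    rw [Real.log_mul (by norm_num) (by positivity),
        Real.log_mul (by positivity) (by positivity), Real.log_pow] at h1
    push_cast at h1
    linarith
  -- h bounds
  have hpos : ∀ t : ℝ, 0 ≤ h t := by intro t; rw [hh]; positivity
  have hle1 : ∀ t : ℝ, h t ≤ 1 := by
    intro t
    rw [hh]
    exact Real.exp_le_one_iff.mpr (neg_nonpos.mpr (sq_nonneg _))
  have h0eq : h 0 = Real.exp (-(μ / σ) ^ 2) := by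
    rw [hh]
    congr 1
    rw [abs_zero]
    ring
  have hd : (0:ℝ) < 1 + 2 * Real.exp (-(μ / σ) ^ 2) := by positivity
  have hαb : α * (1 + 2 * Real.exp (-(μ / σ) ^ 2)) ≤ Real.log (9/8) := by
    have := (le_div_iff₀ hd).mp hαle
    linarith [this]
  have hαb' : α + 2 * (α * h 0) ≤ Real.log (9/8) := by
    rw [h0eq]; nlinarith
  have t1 : 0 ≤ α * h x := mul_nonneg hα.le (hpos x)
  have t2 : 0 ≤ α * h y := mul_nonneg hα.le (hpos y)
  have t3 : α * h (2 * x + y) ≤ α := by nlinarith [hle1 (2 * x + y)]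
  rw [hf x, hf y, hf (2 * x + y), hg x, hg y, hg (2 * x + y)]
  rw [← ha, ← hb, ← hc]
  nlinarith [hlog, hcab, t1, t2, t3, hαb']
end

section
/- Fix reals μ, σ, α > 0 with μ ≥ 1. Define g(x) = |x| + log(1 + |x|), h(x) = exp(−((|x| − μ)/σ)²), and f(x) = g(x) + α·(h(x) − h(0)) for x ∈ ℝ. Then Δ_f(x, y) ≥ Δ_f(|x|, |y|) for all (x, y) ∈ ℝ² with 2|x| + |y| ≤ 1, where Δ_f(x, y) := 2·f(x) + f(y) − f(2x + y). -/
theorem Delta_f_ge_Delta_f_abs (μ σ α : ℝ) (hμ : 0 < μ) (hσ : 0 < σ) (hα : 0 < α)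
    (hμ1 : 1 ≤ μ)
    (g h f : ℝ → ℝ)
    (hg : ∀ x : ℝ, g x = |x| + Real.log (1 + |x|))
    (hh : ∀ x : ℝ, h x = Real.exp (-((|x| - μ) / σ) ^ 2))
    (hf : ∀ x : ℝ, f x = g x + α * (h x - h 0)) :
    ∀ x y : ℝ, 2 * |x| + |y| ≤ 1 →
      2 * f x + f y - f (2 * x + y) ≥ 2 * f |x| + f |y| - f (2 * |x| + |y|) := by
  intro x y hxy
  have fabs : ∀ z : ℝ, f |z| = f z := by
    intro z; rw [hf, hf, hg, hg, hh z, hh |z|, abs_abs]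
  have ha : |2 * x + y| ≤ 2 * |x| + |y| := by
    calc |2 * x + y| ≤ |2 * x| + |y| := abs_add_le _ _
      _ = 2 * |x| + |y| := by rw [abs_mul]; norm_num
  have hb0 : 0 ≤ 2 * |x| + |y| := by positivity
  have hbμ : 2 * |x| + |y| ≤ μ := le_trans hxy hμ1
  have key : f (2 * x + y) ≤ f (2 * |x| + |y|) := by
    rw [hf, hf, hg, hg, hh (2 * x + y), hh (2 * |x| + |y|), abs_of_nonneg hb0]
    have hlog : Real.log (1 + |2 * x + y|) ≤ Real.log (1 + (2 * |x| + |y|)) := by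
      apply Real.log_le_log (by positivity) (by linarith)
    have hsq : ((2 * |x| + |y| - μ) / σ) ^ 2 ≤ ((|2 * x + y| - μ) / σ) ^ 2 := by
      rw [div_pow, div_pow]
      apply div_le_div_of_nonneg_right ?_ (by positivity)
      nlinarith [abs_nonneg (2 * x + y)]
    have hexp : Real.exp (-((|2 * x + y| - μ) / σ) ^ 2) ≤
        Real.exp (-((2 * |x| + |y| - μ) / σ) ^ 2) := by
      apply Real.exp_le_exp.mpr; linarith
    nlinarith [hexp, hα]
  rw [fabs x, fabs y]
  linarith [key]
end

section
/- Fix reals μ, σ, α > 0 with μ ≥ 1 + σ·√(3/2) and α ≤ 17σ² / (54·φ((μ−1)/σ)), where φ(z) := (4z² − 2)·exp(−z²). Define g(x) = |x| + log(1 + |x|), h(x) = exp(−((|x| − μ)/σ)²), and f(x) = g(x) + α·(h(x) − h(0)) for x ∈ ℝ. Then Δ_f(x, y) ≥ 0 for all (x, y) ∈ ℝ² with 2|x| + |y| ≤ 1, where Δ_f(x, y) := 2·f(x) + f(y) − f(2x + y). -/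
/-!
Put `a = |x|`, `b = |y|` and `ψ t = exp (-((t - μ) / σ) ^ 2)`, so that `h = ψ ∘ |·|`. Both `ψ` and
`u t = t + log (1 + t)` increase on `[0, 1]` (as `1 ≤ μ`), so the triangle inequality
`|2x + y| ≤ 2a + b` gives `Δ_f(x, y) ≥ Δ_u(a, b) + α (Δ_ψ(a, b) - 2 ψ 0)`.

For `t ≤ 1` the second derivative of `ψ` is `φ((t - μ)/σ)/σ² ≤ M := φ((μ - 1)/σ)/σ²`, since
`v ↦ (4v - 2) e^{-v}` decreases on `v ≥ 3/2`. So `ψ - M t²/2` is concave on `[0, 1]`, and concave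
functions are subadditive up to their value at `0`; this yields `Δ_ψ(a, b) ≥ 2 ψ 0 - M (a² + 2ab)`.
On the other hand `Δ_u(a, b) = log ((1 + a)² (1 + b) / (1 + 2a + b)) ≥ 17/54 (a² + 2ab)`, and the
hypothesis on `α` says exactly `α M ≤ 17/54`.
-/

open Real Set

noncomputable def Delta (w : ℝ → ℝ) (x y : ℝ) : ℝ := 2 * w x + w y - w (2 * x + y)

lemma Delta_le_Delta_of_eq_comp_abs {w F : ℝ → ℝ} {r x y : ℝ} (hw : MonotoneOn w (Icc 0 r))
    (hF : ∀ x, F x = w |x|) (hxy : 2 * |x| + |y| ≤ r) : Delta w |x| |y| ≤ Delta F x y := by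
  have htri : |2 * x + y| ≤ 2 * |x| + |y| := (abs_add_le _ _).trans_eq (by rw [abs_mul, abs_two])
  have := hw ⟨abs_nonneg _, htri.trans hxy⟩ ⟨by positivity, hxy⟩ htri
  simp only [Delta, hF]
  linarith

lemma ConcaveOn.add_apply_zero_le {q : ℝ → ℝ} {r s t : ℝ} (hq : ConcaveOn ℝ (Icc 0 r) q)
    (hs : 0 ≤ s) (ht : 0 ≤ t) (hst : s + t ≤ r) : q (s + t) + q 0 ≤ q s + q t := by
  rcases (add_nonneg hs ht).eq_or_lt with hzero | hpos
  · obtain rfl : s = 0 := by linarith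
    obtain rfl : t = 0 := by linarith
    simp
  -- `c` is the convex combination `c/(s+t) • (s+t) + d/(s+t) • 0`
  have hcomb : ∀ {c d : ℝ}, 0 ≤ c → 0 ≤ d → c + d = s + t →
      c / (s + t) * q (s + t) + d / (s + t) * q 0 ≤ q c := by
    intro c d hc hd hcd
    have := hq.2 ⟨hpos.le, hst⟩ ⟨le_rfl, hpos.le.trans hst⟩ (div_nonneg hc hpos.le)
      (div_nonneg hd hpos.le) (by rw [← add_div, hcd, div_self hpos.ne'])
    simpa only [smul_eq_mul, mul_zero, add_zero, div_mul_cancel₀ _ hpos.ne'] using this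
  have hs' := hcomb hs ht rfl
  have ht' := hcomb ht hs (add_comm t s)
  have hsum : s / (s + t) + t / (s + t) = 1 := by rw [← add_div, div_self hpos.ne']
  linear_combination hs' + ht' - (q (s + t) + q 0) * hsum

lemma ConcaveOn.two_mul_apply_zero_le_Delta {q : ℝ → ℝ} {r a b : ℝ}
    (hq : ConcaveOn ℝ (Icc 0 r) q) (ha : 0 ≤ a) (hb : 0 ≤ b) (hab : 2 * a + b ≤ r) :
    2 * q 0 ≤ Delta q a b := by
  have h₁ := hq.add_apply_zero_le ha (add_nonneg ha hb) (by linarith)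
  have h₂ := hq.add_apply_zero_le ha hb (by linarith)
  rw [← add_assoc, ← two_mul] at h₁
  simp only [Delta]
  linarith

lemma two_mul_apply_zero_sub_le_Delta_of_deriv2_le {f f' f'' : ℝ → ℝ} {M r a b : ℝ}
    (hf : ∀ t, HasDerivAt f (f' t) t) (hf' : ∀ t, HasDerivAt f' (f'' t) t)
    (hM : ∀ t ∈ Icc 0 r, f'' t ≤ M) (ha : 0 ≤ a) (hb : 0 ≤ b) (hab : 2 * a + b ≤ r) :
    2 * f 0 - M * (a ^ 2 + 2 * a * b) ≤ Delta f a b := by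
  have hq : ∀ t, HasDerivAt (fun t => f t - M / 2 * t ^ 2) (f' t - M * t) t := fun t =>
    ((hf t).sub ((hasDerivAt_pow 2 t).const_mul (M / 2))).congr_deriv (by ring)
  have hq' : ∀ t, HasDerivAt (fun t => f' t - M * t) (f'' t - M) t := fun t =>
    ((hf' t).sub ((hasDerivAt_id t).const_mul M)).congr_deriv (by simp)
  have hconc : ConcaveOn ℝ (Icc 0 r) (fun t => f t - M / 2 * t ^ 2) :=
    concaveOn_of_hasDerivWithinAt2_nonpos (convex_Icc 0 r)
      (fun t _ => (hq t).continuousAt.continuousWithinAt) (fun t _ => (hq t).hasDerivWithinAt)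
      (fun t _ => (hq' t).hasDerivWithinAt)
      (fun t ht => sub_nonpos.2 (hM t (interior_subset ht)))
  have := hconc.two_mul_apply_zero_le_Delta ha hb hab
  simp only [Delta] at this ⊢
  linear_combination this

lemma mul_le_Delta_log_one_add {a b : ℝ} (ha : 0 ≤ a) (hb : 0 ≤ b) (hab : 2 * a + b ≤ 1) :
    17 / 54 * (a ^ 2 + 2 * a * b) ≤ Delta (fun t => log (1 + t)) a b := by
  set P := (1 + a) ^ 2 * (1 + b)
  have hP_pos : 0 < P := by positivity
  have hP_le : P ≤ 54 / 17 := by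
    nlinarith [mul_nonneg (mul_nonneg ha ha) hb, mul_nonneg (sq_nonneg (3 * a - 1)) ha,
      mul_nonneg (sq_nonneg (3 * a - 1)) hb, mul_nonneg (mul_nonneg hb (sq_nonneg (3 * a - 1))) ha]
  have hP_sub : P - (1 + (2 * a + b)) = a ^ 2 + 2 * a * b + a ^ 2 * b := by ring
  have hDelta : Delta (fun t => log (1 + t)) a b = log (P / (1 + (2 * a + b))) := by
    simp only [Delta]
    rw [log_div hP_pos.ne' (by positivity), log_mul (by positivity) (by positivity), log_pow]
    push_cast
    ring
  rw [hDelta]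
  calc 17 / 54 * (a ^ 2 + 2 * a * b) ≤ (P - (1 + (2 * a + b))) / P := by
        rw [le_div_iff₀ hP_pos, hP_sub]
        nlinarith [mul_le_mul_of_nonneg_left hP_le (by positivity : 0 ≤ a ^ 2 + 2 * a * b),
          mul_nonneg (mul_nonneg ha ha) hb]
    _ = 1 - (P / (1 + (2 * a + b)))⁻¹ := by field_simp
    _ ≤ log (P / (1 + (2 * a + b))) := one_sub_inv_le_log_of_pos (by positivity)

lemma mul_le_Delta_of_eq_abs_add_log {g : ℝ → ℝ} (hg : ∀ x, g x = |x| + log (1 + |x|)) {x y : ℝ}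
    (hxy : 2 * |x| + |y| ≤ 1) : 17 / 54 * (|x| ^ 2 + 2 * |x| * |y|) ≤ Delta g x y := by
  have hmono : MonotoneOn (fun t => t + log (1 + t)) (Icc 0 1) := fun s hs t _ hst =>
    add_le_add hst (log_le_log (by linarith [hs.1]) (by linarith))
  calc 17 / 54 * (|x| ^ 2 + 2 * |x| * |y|)
      ≤ Delta (fun t => log (1 + t)) |x| |y| :=
        mul_le_Delta_log_one_add (abs_nonneg x) (abs_nonneg y) hxy
    _ = Delta (fun t => t + log (1 + t)) |x| |y| := by simp only [Delta]; ring
    _ ≤ Delta g x y := Delta_le_Delta_of_eq_comp_abs hmono hg hxy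

lemma antitoneOn_four_mul_sub_two_mul_exp_neg :
    AntitoneOn (fun v => (4 * v - 2) * exp (-v)) (Ici (3 / 2)) := by
  intro w hw v _ hwv
  have hexp : v - w + 1 ≤ exp (v - w) := add_one_le_exp _
  have hw' : (0 : ℝ) ≤ 4 * w - 2 := by linarith [mem_Ici.1 hw]
  calc (4 * v - 2) * exp (-v) ≤ (4 * w - 2) * exp (v - w) * exp (-v) := by
        gcongr
        nlinarith [mul_le_mul_of_nonneg_left hexp hw',
          mul_nonneg (sub_nonneg.2 hwv) (by linarith [mem_Ici.1 hw] : (0 : ℝ) ≤ 4 * w - 6)]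
    _ = (4 * w - 2) * exp (-w) := by rw [mul_assoc, ← exp_add]; ring_nf

lemma hasDerivAt_exp_neg_sq (z : ℝ) :
    HasDerivAt (fun z => exp (-z ^ 2)) (-2 * z * exp (-z ^ 2)) z :=
  ((hasDerivAt_pow 2 z).neg.exp).congr_deriv (by simp only [Pi.neg_apply]; ring)

lemma hasDerivAt_neg_two_mul_mul_exp_neg_sq (z : ℝ) :
    HasDerivAt (fun z => -2 * z * exp (-z ^ 2)) ((4 * z ^ 2 - 2) * exp (-z ^ 2)) z :=
  (((hasDerivAt_id z).const_mul (-2)).mul (hasDerivAt_exp_neg_sq z)).congr_deriv (by simp only [id, mul_one]; ring)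

lemma hasDerivAt_comp_sub_div {F F' : ℝ → ℝ} (hF : ∀ z, HasDerivAt F (F' z) z) (μ σ t : ℝ) :
    HasDerivAt (fun t => F ((t - μ) / σ)) (F' ((t - μ) / σ) / σ) t := by
  have := (hF ((t - μ) / σ)).comp t (((hasDerivAt_id t).sub_const μ).div_const σ)
  rwa [mul_one_div] at this

noncomputable def gaussBump (μ σ t : ℝ) : ℝ := exp (-((t - μ) / σ) ^ 2)

lemma monotoneOn_gaussBump (μ σ : ℝ) : MonotoneOn (gaussBump μ σ) (Iic μ) := by
  intro s _ t ht hst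
  have hsq : ((t - μ) / σ) ^ 2 ≤ ((s - μ) / σ) ^ 2 := by
    rw [div_pow, div_pow]
    exact div_le_div_of_nonneg_right (by nlinarith [mem_Iic.1 ht]) (sq_nonneg σ)
  simp only [gaussBump]
  gcongr

lemma two_mul_gaussBump_zero_sub_le_Delta {μ σ a b : ℝ} (hμ : 1 ≤ μ)
    (hz : 3 / 2 ≤ ((μ - 1) / σ) ^ 2) (ha : 0 ≤ a) (hb : 0 ≤ b) (hab : 2 * a + b ≤ 1) :
    2 * gaussBump μ σ 0 - (4 * ((μ - 1) / σ) ^ 2 - 2) * exp (-((μ - 1) / σ) ^ 2) / σ ^ 2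
      * (a ^ 2 + 2 * a * b) ≤ Delta (gaussBump μ σ) a b := by
  refine two_mul_apply_zero_sub_le_Delta_of_deriv2_le
    (hasDerivAt_comp_sub_div hasDerivAt_exp_neg_sq μ σ)
    (fun t => (hasDerivAt_comp_sub_div hasDerivAt_neg_two_mul_mul_exp_neg_sq μ σ t).div_const σ)
    (fun t ht => ?_) ha hb hab
  have hsq : ((μ - 1) / σ) ^ 2 ≤ ((t - μ) / σ) ^ 2 := by
    rw [div_pow, div_pow]
    exact div_le_div_of_nonneg_right (by nlinarith [ht.2]) (sq_nonneg σ)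
  have := antitoneOn_four_mul_sub_two_mul_exp_neg hz (hz.trans hsq) hsq
  rw [div_div, ← sq]
  gcongr

theorem Delta_f_nonneg_region_B_general (μ σ α : ℝ) (hσ : 0 < σ) (hα : 0 < α)
    (φ : ℝ → ℝ) (hφ : ∀ z : ℝ, φ z = (4 * z ^ 2 - 2) * Real.exp (-z ^ 2))
    (hμσ : 1 + σ * Real.sqrt (3 / 2) ≤ μ)
    (hαle : α ≤ 17 * σ ^ 2 / (54 * φ ((μ - 1) / σ)))
    (g h f : ℝ → ℝ)
    (hg : ∀ x : ℝ, g x = |x| + Real.log (1 + |x|))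
    (hh : ∀ x : ℝ, h x = Real.exp (-((|x| - μ) / σ) ^ 2))
    (hf : ∀ x : ℝ, f x = g x + α * (h x - h 0)) :
    ∀ x y : ℝ, 2 * |x| + |y| ≤ 1 → 0 ≤ 2 * f x + f y - f (2 * x + y) := by
  intro x y hxy
  have hμ : 1 ≤ μ := by nlinarith [sqrt_nonneg (3 / 2)]
  have hz : 3 / 2 ≤ ((μ - 1) / σ) ^ 2 := by
    have : sqrt (3 / 2) ≤ (μ - 1) / σ := by rw [le_div_iff₀ hσ]; linarith
    have := pow_le_pow_left₀ (sqrt_nonneg _) this 2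
    rwa [sq_sqrt (by norm_num)] at this
  have hφ_pos : 0 < φ ((μ - 1) / σ) := by rw [hφ]; exact mul_pos (by linarith) (exp_pos _)
  have hαM : α * (φ ((μ - 1) / σ) / σ ^ 2) ≤ 17 / 54 := by
    rw [le_div_iff₀ (by positivity)] at hαle
    rw [mul_div_assoc', div_le_iff₀ (by positivity)]
    linarith
  have hS : 0 ≤ |x| ^ 2 + 2 * |x| * |y| := by positivity
  have hh0 : h 0 = gaussBump μ σ 0 := by rw [hh, abs_zero]; rfl
  have hΔh : 2 * h 0 - φ ((μ - 1) / σ) / σ ^ 2 * (|x| ^ 2 + 2 * |x| * |y|) ≤ Delta h x y := by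
    rw [hh0, hφ]
    exact (two_mul_gaussBump_zero_sub_le_Delta hμ hz (abs_nonneg x) (abs_nonneg y) hxy).trans
      (Delta_le_Delta_of_eq_comp_abs ((monotoneOn_gaussBump μ σ).mono (Icc_subset_Iic_self.trans
        (Iic_subset_Iic.2 hμ))) hh hxy)
  have hΔf : Delta f x y = Delta g x y + α * (Delta h x y - 2 * h 0) := by
    simp only [Delta, hf]
    ring
  show 0 ≤ Delta f x y
  nlinarith [mul_le_mul_of_nonneg_left hΔh hα.le, mul_le_mul_of_nonneg_right hαM hS,
    mul_le_Delta_of_eq_abs_add_log hg hxy]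

theorem Delta_f_nonneg_region_B (μ σ α : ℝ) (hμ : 0 < μ) (hσ : 0 < σ) (hα : 0 < α)
    (φ : ℝ → ℝ) (hφ : ∀ z : ℝ, φ z = (4 * z ^ 2 - 2) * Real.exp (-z ^ 2))
    (hμσ : 1 + σ * Real.sqrt (3 / 2) ≤ μ)
    (hαle : α ≤ 17 * σ ^ 2 / (54 * φ ((μ - 1) / σ)))
    (g h f : ℝ → ℝ)
    (hg : ∀ x : ℝ, g x = |x| + Real.log (1 + |x|))
    (hh : ∀ x : ℝ, h x = Real.exp (-((|x| - μ) / σ) ^ 2))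
    (hf : ∀ x : ℝ, f x = g x + α * (h x - h 0)) :
    ∀ x y : ℝ, 2 * |x| + |y| ≤ 1 → 0 ≤ 2 * f x + f y - f (2 * x + y) :=
  Delta_f_nonneg_region_B_general μ σ α hσ hα φ hφ hμσ hαle g h f hg hh hf
end

section
/- Let μ = 1.2, σ = 0.05, α = 0.05, and define f : ℝ → ℝ by f(x) = |x| + log(1 + |x|) + α·(exp(−((|x| − μ)/σ)²) − exp(−(μ/σ)²)). Then f(3·x⋆ + y⋆) − 3·f(x⋆) − f(y⋆) > 0.01 for x⋆ = 0.016 and y⋆ = 1.137; in particular, f is not 3-subadditive. -/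
open Real Finset in
lemma aux_log_bound :
    Real.log 2.185 - 3 * Real.log 1.016 - Real.log 2.137 ≥ -0.025427 := by
  set x : ℝ := 1 - 2.185 / (2.137 * 1.016 ^ 3) with hx
  have hx0 : (0:ℝ) < x := by rw [hx]; norm_num
  have hxabs : |x| = x := abs_of_pos hx0
  have hx1 : |x| < 1 := by rw [hxabs, hx]; norm_num
  have h := Real.abs_log_sub_add_sum_range_le hx1 2
  rw [hxabs] at h
  have hsum : ∑ i ∈ range 2, x ^ (i + 1) / (i + 1) = x + x ^ 2 / 2 := by
    simp [Finset.sum_range_succ]; ring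
  rw [hsum] at h
  have hlog : Real.log (1 - x) ≥ -(x + x ^ 2 / 2) - x ^ 3 / (1 - x) := by
    have := abs_le.mp h
    linarith [this.2]
  have h1x : (1 : ℝ) - x = 2.185 / (2.137 * 1.016 ^ 3) := by rw [hx]; ring
  have hlogeq : Real.log (1 - x) =
      Real.log 2.185 - 3 * Real.log 1.016 - Real.log 2.137 := by
    rw [h1x, Real.log_div (by norm_num) (by norm_num),
      Real.log_mul (by norm_num) (by norm_num), Real.log_pow]
    push_cast; ring
  rw [hlogeq] at hlog
  have hnum : -(x + x ^ 2 / 2) - x ^ 3 / (1 - x) ≥ -0.025427 := by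
    rw [hx]; norm_num
  linarith

open Real Finset in
lemma aux_exp1 : Real.exp (-0.09) ≥ 0.913925 := by
  have h := Real.exp_bound (x := -0.09) (abs_le.mpr ⟨by norm_num, by norm_num⟩) (n := 4) (by norm_num)
  have hsum : ∑ i ∈ range 4, (-0.09:ℝ) ^ i / (Nat.factorial i : ℝ) =
      1 - 0.09 + 0.09 ^ 2 / 2 - 0.09 ^ 3 / 6 := by
    norm_num [Finset.sum_range_succ, Nat.factorial]
  rw [hsum] at h
  have := abs_le.mp h
  have h2 : |(-0.09:ℝ)| ^ 4 * ((4:ℕ).succ / ((Nat.factorial 4 : ℝ) * 4)) ≤ 0.0000035 := by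
    rw [show |(-0.09:ℝ)| = 0.09 by rw [abs_of_nonpos] <;> norm_num]
    norm_num [Nat.factorial]
  nlinarith [this.1]

open Real Finset in
lemma aux_exp2 : Real.exp (-1.5876) ≤ 0.204467 := by
  have h := Real.sum_le_exp_of_nonneg (x := 1.5876) (by norm_num) 8
  have hsum : ∑ i ∈ range 8, (1.5876:ℝ) ^ i / (Nat.factorial i : ℝ) =
      1 + 1.5876 + 1.5876 ^ 2 / 2 + 1.5876 ^ 3 / 6 + 1.5876 ^ 4 / 24
        + 1.5876 ^ 5 / 120 + 1.5876 ^ 6 / 720 + 1.5876 ^ 7 / 5040 := by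
    norm_num [Finset.sum_range_succ, Nat.factorial]
  rw [hsum] at h
  rw [Real.exp_neg]
  have hpos : (0:ℝ) < 1 + 1.5876 + 1.5876 ^ 2 / 2 + 1.5876 ^ 3 / 6 + 1.5876 ^ 4 / 24
        + 1.5876 ^ 5 / 120 + 1.5876 ^ 6 / 720 + 1.5876 ^ 7 / 5040 := by norm_num
  have h1 : (Real.exp 1.5876)⁻¹ ≤ (1 + 1.5876 + 1.5876 ^ 2 / 2 + 1.5876 ^ 3 / 6
      + 1.5876 ^ 4 / 24 + 1.5876 ^ 5 / 120 + 1.5876 ^ 6 / 720 + 1.5876 ^ 7 / 5040)⁻¹ :=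
    inv_anti₀ hpos h
  calc (Real.exp 1.5876)⁻¹ ≤ _ := h1
    _ ≤ 0.204467 := by norm_num

open Real Finset in
lemma aux_exp3 : Real.exp (-560.7424) ≤ 0.00001 := by
  have h := Real.sum_le_exp_of_nonneg (x := 560.7424) (by norm_num) 3
  have hsum : ∑ i ∈ range 3, (560.7424:ℝ) ^ i / (Nat.factorial i : ℝ) =
      1 + 560.7424 + 560.7424 ^ 2 / 2 := by
    norm_num [Finset.sum_range_succ, Nat.factorial]
  rw [hsum] at h
  rw [Real.exp_neg]
  have hpos : (0:ℝ) < 1 + 560.7424 + 560.7424 ^ 2 / 2 := by norm_num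
  have h1 : (Real.exp 560.7424)⁻¹ ≤ (1 + 560.7424 + 560.7424 ^ 2 / 2)⁻¹ :=
    inv_anti₀ hpos h
  calc (Real.exp 560.7424)⁻¹ ≤ _ := h1
    _ ≤ 0.00001 := by norm_num

theorem f_not_three_subadditive
    (μ σ α : ℝ) (hμ : μ = 1.2) (hσ : σ = 0.05) (hα : α = 0.05)
    (f : ℝ → ℝ)
    (hf : ∀ x : ℝ, f x = |x| + Real.log (1 + |x|) +
      α * (Real.exp (-((|x| - μ) / σ) ^ 2) - Real.exp (-(μ / σ) ^ 2)))
    (xs ys : ℝ) (hxs : xs = 0.016) (hys : ys = 1.137) :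
    f (3 * xs + ys) - 3 * f xs - f ys > 0.01 ∧
      ¬ (∀ x y : ℝ, f (3 * x + y) ≤ 3 * f x + f y) := by
  have key : f (3 * xs + ys) - 3 * f xs - f ys > 0.01 := by
    subst hμ hσ hα hxs hys
    rw [hf, hf, hf]
    have h1 : |3 * (0.016:ℝ) + 1.137| = 1.185 := by norm_num
    have h2 : |(0.016:ℝ)| = 0.016 := by norm_num
    have h3 : |(1.137:ℝ)| = 1.137 := by norm_num
    rw [h1, h2, h3]
    have e1 : -(((1.185:ℝ) - 1.2) / 0.05) ^ 2 = -0.09 := by norm_num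
    have e2 : -(((0.016:ℝ) - 1.2) / 0.05) ^ 2 = -560.7424 := by norm_num
    have e3 : -(((1.137:ℝ) - 1.2) / 0.05) ^ 2 = -1.5876 := by norm_num
    have e4 : -((1.2:ℝ) / 0.05) ^ 2 = -576 := by norm_num
    rw [e1, e2, e3, e4]
    have l1 : (1:ℝ) + 1.185 = 2.185 := by norm_num
    have l2 : (1:ℝ) + 0.016 = 1.016 := by norm_num
    have l3 : (1:ℝ) + 1.137 = 2.137 := by norm_num
    rw [l1, l2, l3]
    have hA := aux_exp1
    have hB := aux_exp2
    have hC := aux_exp3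
    have hD := aux_log_bound
    have hE : Real.exp (-576) > 0 := Real.exp_pos _
    nlinarith
  refine ⟨key, fun h => ?_⟩
  have := h xs ys
  linarith
end

section
/- Let p > 0 be a real and q ≥ 1 be a rational, let P := { r·p : r ∈ ℚ, r > 0 }, and define f : P → P by f(x) = q·x if x ≤ p and f(x) = x + p·(q − 1) if x > p. Then f is a bijection of P onto P, f is subadditive on P (i.e., f(x + y) ≤ f(x) + f(y) for all x, y ∈ P), and f(x) ≥ x for all x ∈ P. -/
theorem fn_subadditive_bijection (p : ℝ) (hp : 0 < p) (q : ℚ) (hq : 1 ≤ (q : ℝ))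
    (P : Set ℝ) (hP : P = {x : ℝ | ∃ r : ℚ, 0 < r ∧ x = (r : ℝ) * p})
    (f : ℝ → ℝ)
    (hf : ∀ x : ℝ, f x = if x ≤ p then (q : ℝ) * x else x + p * ((q : ℝ) - 1)) :
    Set.BijOn f P P ∧
      (∀ x ∈ P, ∀ y ∈ P, f (x + y) ≤ f x + f y) ∧
      (∀ x ∈ P, x ≤ f x) := by
  subst hP
  have hq0 : (0:ℝ) < q := by linarith
  have hqQ : (1:ℚ) ≤ q := by exact_mod_cast hq
  -- positivity of elements of P
  have hpos : ∀ x ∈ {x : ℝ | ∃ r : ℚ, 0 < r ∧ x = (r : ℝ) * p}, 0 < x := by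
    rintro x ⟨r, hr, rfl⟩
    have : (0:ℝ) < r := by exact_mod_cast hr
    positivity
  -- x ≤ f x
  have hge : ∀ x ∈ {x : ℝ | ∃ r : ℚ, 0 < r ∧ x = (r : ℝ) * p}, x ≤ f x := by
    intro x hx
    have hx0 := hpos x hx
    rw [hf x]
    split_ifs with h
    · nlinarith
    · nlinarith
  have hsm : StrictMono f := by
    intro x y hxy
    rw [hf x, hf y]
    rcases le_or_gt x p with hx | hx
    · rcases le_or_gt y p with hy | hy
      · rw [if_pos hx, if_pos hy]
        exact mul_lt_mul_of_pos_left hxy hq0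
      · rw [if_pos hx, if_neg (not_le.2 hy)]
        nlinarith [mul_nonneg hq0.le (by linarith : (0:ℝ) ≤ p - x)]
    · rw [if_neg (not_le.2 hx), if_neg (not_le.2 (by linarith : p < y))]
      linarith
  refine ⟨⟨?_, hsm.injective.injOn, ?_⟩, ?_, hge⟩
  · -- MapsTo
    rintro x ⟨r, hr, rfl⟩
    rw [hf]
    split_ifs with h
    · exact ⟨q * r, mul_pos (by linarith) hr, by push_cast; ring⟩
    · refine ⟨r + q - 1, by linarith, by push_cast; ring⟩
  · -- SurjOn
    rintro y ⟨s, hs, rfl⟩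
    rcases le_or_gt s q with h | h
    · refine ⟨((s / q : ℚ) : ℝ) * p, ⟨s / q, div_pos hs (by linarith), rfl⟩, ?_⟩
      have hle : ((s / q : ℚ) : ℝ) * p ≤ p := by
        have : ((s / q : ℚ) : ℝ) ≤ 1 := by
          have hq0' : (0:ℚ) < q := by linarith
          exact_mod_cast (div_le_one hq0').2 h
        nlinarith
      rw [hf, if_pos hle]
      have hqne : (q:ℝ) ≠ 0 := ne_of_gt hq0
      push_cast
      field_simp
    · refine ⟨((s - q + 1 : ℚ) : ℝ) * p, ⟨s - q + 1, by linarith, rfl⟩, ?_⟩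
      have hgt : p < ((s - q + 1 : ℚ) : ℝ) * p := by
        have : (1:ℝ) < ((s - q + 1 : ℚ) : ℝ) := by
          push_cast
          have : (q:ℝ) < s := by exact_mod_cast h
          linarith
        nlinarith
      rw [hf, if_neg (not_le.2 hgt)]
      push_cast
      ring
  · -- subadditivity
    intro x hx y hy
    have hx0 := hpos x hx
    have hy0 := hpos y hy
    have hxf := hge x hx
    have hyf := hge y hy
    rw [hf (x + y), hf x, hf y] at *
    split_ifs with h1 h2 h3 h2 h3 h3 h3 <;> nlinarith
end

section
/- Let B ⊆ (0, ∞) be an infinite set that is linearly independent over ℚ, and let H := { q₁·b₁ + ⋯ + q_m·b_m : m ≥ 1, qᵢ ∈ ℚ with qᵢ > 0, bᵢ ∈ B } be the positive rational cone generated by B. Then there exists a bijection f : H → H such that f(x + y) ≤ f(x) + f(y) for all x, y ∈ H, and such that liminf_{x → 0, x ∈ H} f(x) = 0 and limsup_{x → 0, x ∈ H} f(x) = 1. -/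
/-!
Fix an injective sequence `(b k)_{k ∈ ℤ}` in `B`. Linear independence makes each ray
`ℚ_{>0} • b k` a face of the cone: if `x + y` lies on it, so do `x` and `y`. Let `f` send the
ray of `b k` onto the ray of `b (k + 1)` by `q • b k ↦ ψ_k(q) • b (k + 1)`, where
`ψ_k(q) = min (γ_k q) (μ_k q + (γ_k - μ_k) c_k)` is a concave increasing bijection of `ℚ_{>0}`,
and be the identity off the rays; shifting along `ℤ` makes `f` a bijection. Since
`b k ≤ μ_k b (k + 1)` we get `f ≥ id`, so subadditivity only has to be checked when `x + y` is on
a ray, where it is the subadditivity of `ψ_k`.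

With `μ_k b (k + 1) ≤ 2 b k` and corner value `γ_k c_k b (k + 1) ≤ 1` we get `f x ≤ 2x + 1`,
hence `limsup ≤ 1`; this is attained along the corners `c_k b k → 0`, where the corner values tend
to `1`. Near `0` on a single ray `f` is linear, so the `liminf` is `0`.
-/

open Filter Topology Set

namespace Filter

variable {α : Type*} {l : Filter α} {f g : α → ℝ} {x : ℕ → α} {a : ℝ}

lemma limsup_eq_of_le_of_tendsto (hfg : f ≤ᶠ[l] g) (hg : Tendsto g l (𝓝 a))
    (hf : IsBoundedUnder (· ≥ ·) l f) (hx : Tendsto x atTop l)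
    (hfx : Tendsto (f ∘ x) atTop (𝓝 a)) : limsup f l = a := by
  have := hx.neBot
  refine le_antisymm ?_ ?_
  · calc limsup f l ≤ limsup g l :=
          limsup_le_limsup hfg hf.isCoboundedUnder_le hg.isBoundedUnder_le
      _ = a := hg.limsup_eq
  · calc a = limsup f (map x atTop) := by rw [← limsup_comp, hfx.limsup_eq]
      _ ≤ limsup f l := limsup_le_limsup_of_le hx hfx.isBoundedUnder_ge.isCoboundedUnder_le
          (hg.isBoundedUnder_le.mono_le hfg)

lemma liminf_eq_of_le_of_tendsto (hgf : g ≤ᶠ[l] f) (hg : Tendsto g l (𝓝 a))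
    (hf : IsBoundedUnder (· ≤ ·) l f) (hx : Tendsto x atTop l)
    (hfx : Tendsto (f ∘ x) atTop (𝓝 a)) : liminf f l = a := by
  have := hx.neBot
  refine le_antisymm ?_ ?_
  · calc liminf f l ≤ liminf f (map x atTop) :=
          liminf_le_liminf_of_le hx (hg.isBoundedUnder_ge.mono_ge hgf)
            hfx.isBoundedUnder_le.isCoboundedUnder_ge
      _ = a := by rw [← liminf_comp, hfx.liminf_eq]
  · calc a = liminf g l := hg.liminf_eq.symm
      _ ≤ liminf f l := liminf_le_liminf hgf hg.isBoundedUnder_ge hf.isCoboundedUnder_ge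

end Filter

section Kink

variable {K : Type*} [Field K] [LinearOrder K] [IsStrictOrderedRing K] {γ μ c q r : K}

def kink (γ μ c q : K) : K := min (γ * q) (μ * q + (γ - μ) * c)

lemma kink_eq_of_le (hμγ : μ ≤ γ) (hq : q ≤ c) : kink γ μ c q = γ * q :=
  min_eq_left (by nlinarith)

lemma kink_eq_of_ge (hμγ : μ ≤ γ) (hq : c ≤ q) : kink γ μ c q = μ * q + (γ - μ) * c :=
  min_eq_right (by nlinarith)

lemma mul_le_kink (hμγ : μ ≤ γ) (hc : 0 ≤ c) (hq : 0 ≤ q) : μ * q ≤ kink γ μ c q :=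
  le_min (by nlinarith) (by nlinarith)

lemma kink_le (hμ : 0 ≤ μ) (hc : 0 ≤ c) : kink γ μ c q ≤ μ * q + γ * c :=
  (min_le_right _ _).trans (by nlinarith)

lemma kink_add_le (hμγ : μ ≤ γ) (hc : 0 ≤ c) (hq : 0 ≤ q) (hr : 0 ≤ r) :
    kink γ μ c (q + r) ≤ kink γ μ c q + kink γ μ c r := by
  have hq' := mul_le_kink hμγ hc hq
  have hr' := mul_le_kink hμγ hc hr
  have h₁ : kink γ μ c (q + r) ≤ γ * (q + r) := min_le_left _ _
  have h₂ : kink γ μ c (q + r) ≤ μ * (q + r) + (γ - μ) * c := min_le_right _ _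
  unfold kink at *
  rcases min_cases (γ * q) (μ * q + (γ - μ) * c) with ⟨hq, -⟩ | ⟨hq, -⟩ <;>
  rcases min_cases (γ * r) (μ * r + (γ - μ) * c) with ⟨hr, -⟩ | ⟨hr, -⟩ <;>
  linarith

lemma kink_strictMono (hγ : 0 < γ) (hμ : 0 < μ) : StrictMono (kink γ μ c) := fun q r h =>
  lt_min ((min_le_left _ _).trans_lt (by gcongr))
    ((min_le_right _ _).trans_lt (by gcongr))

lemma kink_bijOn (hμ : 0 < μ) (hμγ : μ ≤ γ) (hc : 0 ≤ c) :
    BijOn (kink γ μ c) (Ioi 0) (Ioi 0) := by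
  have hγ : 0 < γ := hμ.trans_le hμγ
  refine ⟨fun q hq => (mul_pos hμ hq).trans_le (mul_le_kink hμγ hc (le_of_lt hq)),
    (kink_strictMono hγ hμ).injective.injOn, fun p (hp : 0 < p) => ?_⟩
  rcases le_total p (γ * c) with hpc | hpc
  · refine ⟨p / γ, div_pos hp hγ, ?_⟩
    rw [kink_eq_of_le hμγ ((div_le_iff₀ hγ).2 (by linarith)), mul_div_cancel₀ _ hγ.ne']
  · refine ⟨(p - (γ - μ) * c) / μ, ?_, ?_⟩
    · exact div_pos (by nlinarith) hμ
    · rw [kink_eq_of_ge hμγ ((le_div_iff₀ hμ).2 (by linarith)), mul_div_cancel₀ _ hμ.ne']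
      ring

end Kink

def posRatCone (B : Set ℝ) : Set ℝ :=
  {x : ℝ | ∃ s : Finset ℝ, ↑s ⊆ B ∧ s.Nonempty ∧
    ∃ c : ℝ → ℚ, (∀ b ∈ s, 0 < c b) ∧ x = ∑ b ∈ s, (c b : ℝ) * b}

namespace posRatCone

variable {B : Set ℝ}

lemma rat_mul_mem {q : ℚ} (hq : 0 < q) {b : ℝ} (hb : b ∈ B) : (q : ℝ) * b ∈ posRatCone B :=
  ⟨{b}, by simpa using hb, Finset.singleton_nonempty b, fun _ => q, fun _ _ => hq, by simp⟩

lemma pos (hB : B ⊆ Ioi 0) {x : ℝ} (hx : x ∈ posRatCone B) : 0 < x := by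
  obtain ⟨s, hsB, hs, c, hc, rfl⟩ := hx
  exact Finset.sum_pos (fun b hb => mul_pos (by exact_mod_cast hc b hb) (hB (hsB hb))) hs

lemma exists_finsupp {x : ℝ} (hx : x ∈ posRatCone B) :
    ∃ l : B →₀ ℚ, 0 ≤ l ∧ Finsupp.linearCombination ℚ ((↑) : B → ℝ) l = x := by
  classical
  obtain ⟨s, hsB, -, c, hc, rfl⟩ := hx
  refine ⟨∑ b ∈ s.subtype (· ∈ B), Finsupp.single b (c b),
    Finset.sum_nonneg fun b hb => Finsupp.single_nonneg.2 (hc b (Finset.mem_subtype.1 hb)).le, ?_⟩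
  simp only [map_sum, Finsupp.linearCombination_single, Rat.smul_def]
  exact Finset.sum_subtype_of_mem (fun b => (c b : ℝ) * b) hsB

end posRatCone

namespace LinearIndependent

variable {B : Set ℝ}

lemma eq_and_eq_of_rat_mul_eq_rat_mul (hBind : LinearIndependent ℚ ((↑) : B → ℝ)) {u v : ℝ}
    (hu : u ∈ B) (hv : v ∈ B) {q p : ℚ} (hq : q ≠ 0) (h : (q : ℝ) * u = p * v) : u = v ∧ q = p := by
  have : Finsupp.single (⟨u, hu⟩ : B) q = Finsupp.single ⟨v, hv⟩ p :=
    hBind (by simpa [Finsupp.linearCombination_single, Rat.smul_def] using h)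
  rcases (Finsupp.single_eq_single_iff _ _ _ _).1 this with ⟨huv, rfl⟩ | ⟨rfl, -⟩
  · exact ⟨congrArg Subtype.val huv, rfl⟩
  · exact absurd rfl hq

lemma exists_eq_rat_mul_of_add_eq_rat_mul (hBind : LinearIndependent ℚ ((↑) : B → ℝ))
    (hB : B ⊆ Ioi 0) {x y u : ℝ} (hx : x ∈ posRatCone B) (hy : y ∈ posRatCone B) (hu : u ∈ B)
    {p : ℚ} (hxy : x + y = p * u) : ∃ q : ℚ, 0 < q ∧ x = q * u := by
  have hx0 := posRatCone.pos hB hx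
  obtain ⟨lx, hlx, rfl⟩ := posRatCone.exists_finsupp hx
  obtain ⟨ly, hly, rfl⟩ := posRatCone.exists_finsupp hy
  have hsum : lx + ly = Finsupp.single ⟨u, hu⟩ p :=
    hBind (by simpa [Finsupp.linearCombination_single, Rat.smul_def] using hxy)
  have hlx_single : lx = Finsupp.single ⟨u, hu⟩ (lx ⟨u, hu⟩) := by
    refine Finsupp.eq_single_iff.2 ⟨fun i hi => Finset.mem_singleton.2 ?_, rfl⟩
    by_contra hiu
    have h0 : lx i + ly i = 0 := by
      simpa [Finsupp.single_apply, Ne.symm hiu] using DFunLike.congr_fun hsum i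
    exact Finsupp.mem_support_iff.1 hi ((add_eq_zero_iff_of_nonneg (hlx i) (hly i)).1 h0).1
  have hx_eq : Finsupp.linearCombination ℚ ((↑) : B → ℝ) lx = lx ⟨u, hu⟩ * u := by
    conv_lhs => rw [hlx_single]
    simp [Finsupp.linearCombination_single, Rat.smul_def]
  rw [hx_eq] at hx0 ⊢
  exact ⟨lx ⟨u, hu⟩, by exact_mod_cast pos_of_mul_pos_left hx0 (hB hu).le, rfl⟩

end LinearIndependent

def rays (b : ℤ → ℝ) : Set ℝ := {x | ∃ kq : ℤ × ℚ, 0 < kq.2 ∧ x = kq.2 * b kq.1}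

lemma rat_mul_mem_rays {b : ℤ → ℝ} {q : ℚ} (hq : 0 < q) (k : ℤ) : (q : ℝ) * b k ∈ rays b :=
  ⟨(k, q), hq, rfl⟩

lemma rays_subset_posRatCone {B : Set ℝ} {b : ℤ → ℝ} (hbB : ∀ k, b k ∈ B) :
    rays b ⊆ posRatCone B := by
  rintro _ ⟨⟨k, q⟩, hq, rfl⟩
  exact posRatCone.rat_mul_mem hq (hbB k)

open Classical in
noncomputable def rayShift (b : ℤ → ℝ) (ψ : ℤ → ℚ → ℚ) (x : ℝ) : ℝ :=
  if h : ∃ kq : ℤ × ℚ, 0 < kq.2 ∧ x = kq.2 * b kq.1 then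
    ψ h.choose.1 h.choose.2 * b (h.choose.1 + 1)
  else x

namespace rayShift

variable {B : Set ℝ} {b : ℤ → ℝ} {ψ : ℤ → ℚ → ℚ}

lemma eq_of_rat_mul_eq (hBind : LinearIndependent ℚ ((↑) : B → ℝ)) (hbB : ∀ k, b k ∈ B)
    (hb : Function.Injective b) {k l : ℤ} {q p : ℚ} (hq : q ≠ 0)
    (h : (q : ℝ) * b k = p * b l) : k = l ∧ q = p :=
  (hBind.eq_and_eq_of_rat_mul_eq_rat_mul (hbB k) (hbB l) hq h).imp_left (@hb k l)

lemma apply_rat_mul (hBind : LinearIndependent ℚ ((↑) : B → ℝ)) (hbB : ∀ k, b k ∈ B)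
    (hb : Function.Injective b) {q : ℚ} (hq : 0 < q) (k : ℤ) :
    rayShift b ψ (q * b k) = ψ k q * b (k + 1) := by
  have h : ∃ kq : ℤ × ℚ, 0 < kq.2 ∧ (q : ℝ) * b k = kq.2 * b kq.1 := ⟨(k, q), hq, rfl⟩
  obtain ⟨hk, hq'⟩ := eq_of_rat_mul_eq hBind hbB hb hq.ne' h.choose_spec.2
  rw [rayShift, dif_pos h, ← hk, ← hq']

lemma apply_of_notMem_rays {x : ℝ} (hx : x ∉ rays b) : rayShift b ψ x = x :=
  dif_neg hx

lemma apply_mem_rays_iff (hBind : LinearIndependent ℚ ((↑) : B → ℝ)) (hbB : ∀ k, b k ∈ B)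
    (hb : Function.Injective b) (hψ : ∀ k, MapsTo (ψ k) (Ioi 0) (Ioi 0)) {x : ℝ} :
    rayShift b ψ x ∈ rays b ↔ x ∈ rays b := by
  refine ⟨fun h => ?_, ?_⟩
  · by_contra hx
    exact hx (apply_of_notMem_rays hx ▸ h)
  · rintro ⟨⟨k, q⟩, hq, rfl⟩
    rw [apply_rat_mul hBind hbB hb hq]
    exact rat_mul_mem_rays (hψ k hq) _

lemma bijOn (hBind : LinearIndependent ℚ ((↑) : B → ℝ)) (hbB : ∀ k, b k ∈ B)
    (hb : Function.Injective b) (hψ : ∀ k, BijOn (ψ k) (Ioi 0) (Ioi 0)) :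
    BijOn (rayShift b ψ) (posRatCone B) (posRatCone B) := by
  have hmem (x : ℝ) := apply_mem_rays_iff (x := x) hBind hbB hb fun k => (hψ k).mapsTo
  refine ⟨fun x hx => ?_, fun x _ y _ hxy => ?_, fun y hy => ?_⟩
  · by_cases hxr : x ∈ rays b
    · exact rays_subset_posRatCone hbB ((hmem _).2 hxr)
    · rwa [apply_of_notMem_rays hxr]
  · by_cases hxr : x ∈ rays b
    · obtain ⟨⟨k, q⟩, hq, rfl⟩ := hxr
      obtain ⟨⟨l, p⟩, hp, rfl⟩ := (hmem _).1 (hxy ▸ (hmem _).2 (rat_mul_mem_rays hq k))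
      rw [apply_rat_mul hBind hbB hb hq, apply_rat_mul hBind hbB hb hp] at hxy
      obtain ⟨hkl, hψqp⟩ := eq_of_rat_mul_eq hBind hbB hb ((hψ k).mapsTo hq).ne' hxy
      obtain rfl : k = l := add_right_cancel hkl
      rw [(hψ k).injOn hq hp hψqp]
    · have hyr : y ∉ rays b := fun hyr => hxr ((hmem _).1 (hxy ▸ (hmem _).2 hyr))
      rwa [apply_of_notMem_rays hxr, apply_of_notMem_rays hyr] at hxy
  · by_cases hyr : y ∈ rays b
    · obtain ⟨⟨l, p⟩, hp, rfl⟩ := hyr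
      obtain ⟨q, hq, hqp⟩ := (hψ (l - 1)).surjOn hp
      refine ⟨q * b (l - 1), posRatCone.rat_mul_mem hq (hbB _), ?_⟩
      rw [apply_rat_mul hBind hbB hb hq, hqp, sub_add_cancel]
    · exact ⟨y, hy, apply_of_notMem_rays hyr⟩

lemma self_le (hBind : LinearIndependent ℚ ((↑) : B → ℝ)) (hbB : ∀ k, b k ∈ B)
    (hb : Function.Injective b) (hψ : ∀ k (q : ℚ), 0 < q → q * b k ≤ ψ k q * b (k + 1))
    (x : ℝ) : x ≤ rayShift b ψ x := by
  by_cases hx : x ∈ rays b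
  · obtain ⟨⟨k, q⟩, hq, rfl⟩ := hx
    rw [apply_rat_mul hBind hbB hb hq]
    exact hψ k q hq
  · rw [apply_of_notMem_rays hx]

lemma map_add_le_add (hBind : LinearIndependent ℚ ((↑) : B → ℝ)) (hB : B ⊆ Ioi 0)
    (hbB : ∀ k, b k ∈ B) (hb : Function.Injective b)
    (hψ : ∀ k (q : ℚ), 0 < q → q * b k ≤ ψ k q * b (k + 1))
    (hψ_add : ∀ k (q r : ℚ), 0 < q → 0 < r → ψ k (q + r) ≤ ψ k q + ψ k r)
    {x y : ℝ} (hx : x ∈ posRatCone B) (hy : y ∈ posRatCone B) :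
    rayShift b ψ (x + y) ≤ rayShift b ψ x + rayShift b ψ y := by
  by_cases hxy : x + y ∈ rays b
  · obtain ⟨⟨k, p⟩, -, hxy⟩ := hxy
    obtain ⟨q, hq, rfl⟩ := hBind.exists_eq_rat_mul_of_add_eq_rat_mul hB hx hy (hbB k) hxy
    obtain ⟨r, hr, rfl⟩ :=
      hBind.exists_eq_rat_mul_of_add_eq_rat_mul hB hy hx (hbB k) ((add_comm _ _).trans hxy)
    have hsum : (q : ℝ) * b k + r * b k = ((q + r : ℚ) : ℝ) * b k := by push_cast; ring
    rw [hsum, apply_rat_mul hBind hbB hb (add_pos hq hr), apply_rat_mul hBind hbB hb hq,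
      apply_rat_mul hBind hbB hb hr, ← add_mul]
    gcongr
    · exact (hB (hbB _)).le
    · exact_mod_cast hψ_add k q r hq hr
  · rw [apply_of_notMem_rays hxy]
    exact add_le_add (self_le hBind hbB hb hψ x) (self_le hBind hbB hb hψ y)

end rayShift

lemma exists_kink_params {β β' ε : ℝ} (hβ : 0 < β) (hβ' : 0 < β') (hε : 0 < ε) :
    ∃ γ μ c : ℚ, 0 < μ ∧ μ ≤ γ ∧ 0 < c ∧ β ≤ μ * β' ∧ μ * β' ≤ 2 * β ∧
      c * β ≤ ε ∧ 1 - ε ≤ γ * c * β' ∧ γ * c * β' ≤ 1 := by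
  obtain ⟨μ, hμl, hμr⟩ := exists_rat_btwn (div_lt_div_of_pos_right (by linarith) hβ' :
    β / β' < 2 * β / β')
  have hμ : (0 : ℝ) < μ := (div_pos hβ hβ').trans hμl
  obtain ⟨c, hc, hcε⟩ := exists_rat_btwn
    (lt_min (div_pos hε hβ) (one_div_pos.2 (mul_pos hμ hβ')) : 0 < min (ε / β) (1 / (μ * β')))
  have hc₀ : (0 : ℝ) < c := hc
  have hcβ' : 0 < (c : ℝ) * β' := mul_pos hc hβ'
  have hμc : (μ : ℝ) < 1 / (c * β') := by
    rw [lt_div_iff₀ hcβ']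
    have := (lt_div_iff₀ (mul_pos hμ hβ')).1 (hcε.trans_le (min_le_right _ _))
    nlinarith
  obtain ⟨γ, hγl, hγr⟩ := exists_rat_btwn
    (max_lt hμc (div_lt_div_of_pos_right (by linarith) hcβ') :
      max (μ : ℝ) ((1 - ε) / (c * β')) < 1 / (c * β'))
  refine ⟨γ, μ, c, by exact_mod_cast hμ, ?_, by exact_mod_cast hc, ?_, ?_, ?_, ?_, ?_⟩
  · exact_mod_cast ((le_max_left _ _).trans hγl.le)
  · exact ((div_le_iff₀ hβ').1 hμl.le).trans_eq' (by ring)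
  · linarith [(lt_div_iff₀ hβ').1 hμr]
  · exact ((lt_div_iff₀ hβ).1 (hcε.trans_le (min_le_left _ _))).le
  · have := (div_le_iff₀ hcβ').1 ((le_max_right _ _).trans hγl.le)
    linarith
  · have := (lt_div_iff₀ hcβ').1 hγr
    linarith

structure KinkParams (b ε : ℤ → ℝ) where
  γ : ℤ → ℚ
  μ : ℤ → ℚ
  c : ℤ → ℚ
  μ_pos : ∀ k, 0 < μ k
  μ_le_γ : ∀ k, μ k ≤ γ k
  c_pos : ∀ k, 0 < c k
  le_μ_mul : ∀ k, b k ≤ μ k * b (k + 1)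
  μ_mul_le : ∀ k, μ k * b (k + 1) ≤ 2 * b k
  c_mul_le : ∀ k, c k * b k ≤ ε k
  le_γ_mul_c_mul : ∀ k, 1 - ε k ≤ γ k * c k * b (k + 1)
  γ_mul_c_mul_le : ∀ k, γ k * c k * b (k + 1) ≤ 1

namespace KinkParams

variable {B : Set ℝ} {b ε : ℤ → ℝ}

lemma nonempty (hb : ∀ k, 0 < b k) (hε : ∀ k, 0 < ε k) : Nonempty (KinkParams b ε) := by
  choose γ μ c h using fun k => exists_kink_params (hb k) (hb (k + 1)) (hε k)
  exact ⟨⟨γ, μ, c, fun k => (h k).1, fun k => (h k).2.1, fun k => (h k).2.2.1,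
    fun k => (h k).2.2.2.1, fun k => (h k).2.2.2.2.1, fun k => (h k).2.2.2.2.2.1,
    fun k => (h k).2.2.2.2.2.2.1, fun k => (h k).2.2.2.2.2.2.2⟩⟩

variable (P : KinkParams b ε)

def ψ (k : ℤ) : ℚ → ℚ := kink (P.γ k) (P.μ k) (P.c k)

lemma bijOn_ψ (k : ℤ) : BijOn (P.ψ k) (Ioi 0) (Ioi 0) :=
  kink_bijOn (P.μ_pos k) (P.μ_le_γ k) (P.c_pos k).le

lemma ψ_add_le (k : ℤ) {q r : ℚ} (hq : 0 < q) (hr : 0 < r) :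
    P.ψ k (q + r) ≤ P.ψ k q + P.ψ k r :=
  kink_add_le (P.μ_le_γ k) (P.c_pos k).le hq.le hr.le

lemma ψ_of_le {k : ℤ} {q : ℚ} (hq : q ≤ P.c k) : P.ψ k q = P.γ k * q :=
  kink_eq_of_le (P.μ_le_γ k) hq

lemma le_ψ_mul (hb : ∀ k, 0 < b k) (k : ℤ) {q : ℚ} (hq : 0 < q) :
    q * b k ≤ P.ψ k q * b (k + 1) := by
  have h : (P.μ k : ℝ) * q ≤ P.ψ k q := by
    exact_mod_cast mul_le_kink (P.μ_le_γ k) (P.c_pos k).le hq.le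
  calc (q : ℝ) * b k ≤ q * (P.μ k * b (k + 1)) := by
        gcongr
        exact P.le_μ_mul k
    _ = P.μ k * q * b (k + 1) := by ring
    _ ≤ P.ψ k q * b (k + 1) := by gcongr; exact (hb _).le

lemma ψ_mul_le_two_mul_add_one (hb : ∀ k, 0 < b k) (k : ℤ) {q : ℚ} (hq : 0 ≤ q) :
    P.ψ k q * b (k + 1) ≤ 2 * (q * b k) + 1 := by
  have h : (P.ψ k q : ℝ) ≤ P.μ k * q + P.γ k * P.c k := by
    exact_mod_cast kink_le (P.μ_pos k).le (P.c_pos k).le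
  have hq' : (0 : ℝ) ≤ q := by exact_mod_cast hq
  calc (P.ψ k q : ℝ) * b (k + 1) ≤ (P.μ k * q + P.γ k * P.c k) * b (k + 1) := by
        gcongr; exact (hb _).le
    _ = q * (P.μ k * b (k + 1)) + P.γ k * P.c k * b (k + 1) := by ring
    _ ≤ q * (2 * b k) + 1 :=
        add_le_add (mul_le_mul_of_nonneg_left (P.μ_mul_le k) hq') (P.γ_mul_c_mul_le k)
    _ = 2 * (q * b k) + 1 := by ring

lemma rayShift_le_two_mul_add_one (hBind : LinearIndependent ℚ ((↑) : B → ℝ)) (hB : B ⊆ Ioi 0)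
    (hbB : ∀ k, b k ∈ B) (hb : Function.Injective b) {x : ℝ} (hx : x ∈ posRatCone B) :
    rayShift b P.ψ x ≤ 2 * x + 1 := by
  by_cases hxr : x ∈ rays b
  · obtain ⟨⟨k, q⟩, hq, rfl⟩ := hxr
    rw [rayShift.apply_rat_mul hBind hbB hb hq]
    exact P.ψ_mul_le_two_mul_add_one (fun k => hB (hbB k)) k hq.le
  · rw [rayShift.apply_of_notMem_rays hxr]
    linarith [posRatCone.pos hB hx]

lemma exists_tendsto_rayShift_zero (hBind : LinearIndependent ℚ ((↑) : B → ℝ))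
    (hbB : ∀ k, b k ∈ B) (hb : Function.Injective b) :
    ∃ x : ℕ → ℝ, Tendsto x atTop (𝓝[posRatCone B] 0) ∧
      Tendsto (rayShift b P.ψ ∘ x) atTop (𝓝 0) := by
  have hq (n : ℕ) : 0 < P.c 0 / (n + 1) := div_pos (P.c_pos 0) n.cast_add_one_pos
  have hinv := tendsto_one_div_add_atTop_nhds_zero_nat (𝕜 := ℝ)
  refine ⟨fun n => (P.c 0 / (n + 1) : ℚ) * b 0, tendsto_nhdsWithin_iff.2 ⟨?_,
    Eventually.of_forall fun n => posRatCone.rat_mul_mem (hq n) (hbB 0)⟩, ?_⟩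
  · refine (by simpa using hinv.const_mul (P.c 0 * b 0) :
      Tendsto (fun n : ℕ => P.c 0 * b 0 * (1 / (n + 1))) atTop (𝓝 0)).congr fun n => ?_
    push_cast
    ring
  · refine (by simpa using hinv.const_mul (P.γ 0 * P.c 0 * b 1) :
      Tendsto (fun n : ℕ => P.γ 0 * P.c 0 * b 1 * (1 / (n + 1))) atTop (𝓝 0)).congr fun n => ?_
    have hqc : P.c 0 / (n + 1) ≤ P.c 0 :=
      div_le_self (P.c_pos 0).le (by linarith [n.cast_nonneg (α := ℚ)])
    rw [Function.comp_apply, rayShift.apply_rat_mul hBind hbB hb (hq n), P.ψ_of_le hqc]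
    push_cast
    ring

lemma exists_tendsto_rayShift_one (hBind : LinearIndependent ℚ ((↑) : B → ℝ))
    (hB : B ⊆ Ioi 0) (hbB : ∀ k, b k ∈ B) (hb : Function.Injective b)
    (hε : Tendsto (fun n : ℕ => ε n) atTop (𝓝 0)) :
    ∃ x : ℕ → ℝ, Tendsto x atTop (𝓝[posRatCone B] 0) ∧
      Tendsto (rayShift b P.ψ ∘ x) atTop (𝓝 1) := by
  refine ⟨fun n => P.c n * b n, tendsto_nhdsWithin_iff.2 ⟨?_,
    Eventually.of_forall fun n => posRatCone.rat_mul_mem (P.c_pos n) (hbB n)⟩, ?_⟩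
  · refine squeeze_zero (fun n => ?_) (fun n => P.c_mul_le n) hε
    exact (mul_pos (by exact_mod_cast P.c_pos n) (hB (hbB n))).le
  · have hf (n : ℕ) : rayShift b P.ψ (P.c n * b n) = P.γ n * P.c n * b (n + 1) := by
      rw [rayShift.apply_rat_mul hBind hbB hb (P.c_pos n), P.ψ_of_le le_rfl]
      push_cast
      ring
    refine tendsto_of_tendsto_of_tendsto_of_le_of_le (by simpa using tendsto_const_nhds.sub hε)
      tendsto_const_nhds (fun n => ?_) (fun n => ?_)
    · simpa only [Function.comp_apply, hf] using P.le_γ_mul_c_mul n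
    · simpa only [Function.comp_apply, hf] using P.γ_mul_c_mul_le n

end KinkParams

theorem exists_subadditive_bijection_on_cone
    (B : Set ℝ) (hB : B ⊆ Set.Ioi 0) (hBinf : B.Infinite)
    (hBind : LinearIndependent ℚ ((↑) : B → ℝ))
    (H : Set ℝ)
    (hH : H = {x : ℝ | ∃ s : Finset ℝ, ↑s ⊆ B ∧ s.Nonempty ∧
      ∃ c : ℝ → ℚ, (∀ b ∈ s, 0 < c b) ∧ x = ∑ b ∈ s, (c b : ℝ) * b}) :
    ∃ f : ℝ → ℝ, Set.BijOn f H H ∧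
      (∀ x ∈ H, ∀ y ∈ H, f (x + y) ≤ f x + f y) ∧
      Filter.liminf f (nhdsWithin 0 H) = 0 ∧
      Filter.limsup f (nhdsWithin 0 H) = 1 := by
  obtain rfl : H = posRatCone B := hH
  let e : ℤ ↪ B := Equiv.intEquivNat.toEmbedding.trans (hBinf.natEmbedding B)
  let b : ℤ → ℝ := (↑) ∘ e
  have hbB (k : ℤ) : b k ∈ B := (e k).2
  have hb : Function.Injective b := Subtype.val_injective.comp e.injective
  have hb_pos (k : ℤ) : 0 < b k := hB (hbB k)
  obtain ⟨P⟩ := KinkParams.nonempty hb_pos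
    (ε := fun k => 1 / (k.natAbs + 1)) fun k => by positivity
  obtain ⟨x₀, hx₀, hfx₀⟩ := P.exists_tendsto_rayShift_zero hBind hbB hb
  obtain ⟨x₁, hx₁, hfx₁⟩ := P.exists_tendsto_rayShift_one hBind hB hbB hb
    (by simpa using tendsto_one_div_add_atTop_nhds_zero_nat (𝕜 := ℝ))
  have hf_nonneg : ∀ᶠ x in 𝓝[posRatCone B] 0, 0 ≤ rayShift b P.ψ x :=
    eventually_nhdsWithin_of_forall fun x hx =>
      (posRatCone.pos hB hx).le.trans (rayShift.self_le hBind hbB hb (P.le_ψ_mul hb_pos) x)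
  have hf_le : ∀ᶠ x in 𝓝[posRatCone B] 0, rayShift b P.ψ x ≤ 2 * x + 1 :=
    eventually_nhdsWithin_of_forall fun x hx => P.rayShift_le_two_mul_add_one hBind hB hbB hb hx
  have h_affine : Tendsto (fun x : ℝ => 2 * x + 1) (𝓝[posRatCone B] 0) (𝓝 1) :=
    tendsto_nhdsWithin_of_tendsto_nhds
      (by simpa using ((continuous_id.const_mul (2 : ℝ)).add_const 1).tendsto 0)
  refine ⟨rayShift b P.ψ, rayShift.bijOn hBind hbB hb P.bijOn_ψ,
    fun x hx y hy => rayShift.map_add_le_add hBind hB hbB hb (P.le_ψ_mul hb_pos)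
      (fun k _ _ => P.ψ_add_le k) hx hy, ?_, ?_⟩
  · exact liminf_eq_of_le_of_tendsto hf_nonneg tendsto_const_nhds
      (h_affine.isBoundedUnder_le.mono_le hf_le) hx₀ hfx₀
  · exact limsup_eq_of_le_of_tendsto hf_le h_affine (isBoundedUnder_of_eventually_ge hf_nonneg)
      hx₁ hfx₁
end

section
/- Let (p_n)_{n≥1} be a ℚ-linearly independent sequence in (0, ∞) with 0 < p_n < 2^{−n} for all n, let P_n := { r·p_n : r ∈ ℚ, r > 0 }, let P := ⋃_n P_n, let H be the positive rational cone generated by a ℚ-linearly independent set B ⊇ {p_n : n ≥ 1}, and for each n pick a rational q_n with 1 − 2^{−n} < p_n·q_n < 1. Define f : H → H by f(x) = q_n·x if x ∈ P_n and x ≤ p_n, f(x) = x + p_n·(q_n − 1) if x ∈ P_n and x > p_n, and f(x) = x if x ∈ H \ P. Then f is a bijection of H onto H and f(x + y) ≤ f(x) + f(y) for all x, y ∈ H. -/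
/-!
Since `B` is `ℚ`-linearly independent, the coefficients of an element of `H` are unique and
positive; hence the rays `P n` are pairwise disjoint, and a sum `x + y` with `x, y ∈ H` lies in
`P n` only if `x` and `y` do. Along `P n` the map `f` reads `r • p n ↦ glue (q n) r • p n`, where
`glue q` has slope `q` on `(0, 1]` and slope `1` beyond. As `p n < 2⁻ⁿ ≤ 1 - 2⁻ⁿ < p n * q n`
forces `q n > 1`, `glue (q n)` is an increasing bijection of `ℚ_{>0}`, subadditive and above the
identity. So `f` permutes each ray and fixes the rest of `H`, it is subadditive on sums that fall
in a ray, and for any other sum `f (x + y) = x + y ≤ f x + f y`.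
-/

open Set Function

namespace Set

variable {α β ι : Type*} {f : α → α}

theorem BijOn.image_of_eqOn_comp {s : Set β} {φ : β → α} {g : β → β} (hg : BijOn g s s)
    (hφ : InjOn φ s) (h : EqOn (f ∘ φ) (φ ∘ g) s) : BijOn f (φ '' s) (φ '' s) := by
  rw [← bijOn_comp_iff hφ]
  exact (hφ.bijOn_image.comp hg).congr h.symm

theorem bijOn_iUnion_of_pairwise_disjoint {s : ι → Set α} (hd : Pairwise (Disjoint on s))
    (H : ∀ i, BijOn f (s i) (s i)) : BijOn f (⋃ i, s i) (⋃ i, s i) := by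
  refine bijOn_iUnion H fun x hx y hy hxy => ?_
  obtain ⟨i, hxi⟩ := mem_iUnion.mp hx
  obtain ⟨j, hyj⟩ := mem_iUnion.mp hy
  obtain rfl : i = j := by
    by_contra hij
    exact (hd hij).notMem_of_mem_left ((H i).mapsTo hxi) (hxy ▸ (H j).mapsTo hyj)
  exact (H i).injOn hxi hyj hxy

theorem BijOn.of_eqOn_id_diff {s t : Set α} (hs : BijOn f s s) (hst : s ⊆ t)
    (hid : EqOn f id (t \ s)) : BijOn f t t := by
  have hdiff : BijOn f (t \ s) (t \ s) := (bijOn_id _).congr hid.symm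
  rw [← union_sdiff_cancel hst]
  refine hs.union hdiff ((injOn_union disjoint_sdiff_right).mpr ⟨hs.injOn, hdiff.injOn, ?_⟩)
  rintro x hx y ⟨hyt, hy⟩ hxy
  have hfy : f y = y := hid ⟨hyt, hy⟩
  exact hy (hfy ▸ hxy ▸ hs.mapsTo hx)

end Set

section Glue

variable {K : Type*} [Field K] [LinearOrder K] [IsStrictOrderedRing K] {q r u : K}

/-- The glued map in coordinates along a ray: `r • p ↦ glue q r • p`. -/
def glue (q r : K) : K := if r ≤ 1 then q * r else r + (q - 1)

theorem glue_zero (q : K) : glue q 0 = 0 := by simp [glue]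

theorem glue_strictMono (hq : 0 < q) : StrictMono (glue q) := by
  intro r u hru
  unfold glue
  split_ifs <;> nlinarith

theorem glue_surjective (hq : 0 < q) : Surjective (glue q) := by
  intro t
  by_cases ht : t ≤ q
  · refine ⟨t / q, ?_⟩
    rw [glue, if_pos ((div_le_one hq).mpr ht)]
    field_simp
  · refine ⟨t - q + 1, ?_⟩
    rw [glue, if_neg (by linarith)]
    ring

theorem bijOn_glue (hq : 0 < q) : BijOn (glue q) (Ioi 0) (Ioi 0) := by
  have hpos : ∀ r, 0 < glue q r ↔ 0 < r := fun r => by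
    simpa only [glue_zero] using (glue_strictMono hq).lt_iff_lt (a := 0) (b := r)
  refine ⟨fun r hr => (hpos r).mpr hr, (glue_strictMono hq).injective.injOn, fun t ht => ?_⟩
  obtain ⟨r, rfl⟩ := glue_surjective hq t
  exact ⟨r, (hpos r).mp ht, rfl⟩

theorem le_glue (hq : 1 ≤ q) (hr : 0 ≤ r) : r ≤ glue q r := by
  unfold glue
  split_ifs <;> nlinarith

theorem glue_add_le (hq : 1 ≤ q) (hr : 0 ≤ r) (hu : 0 ≤ u) :
    glue q (r + u) ≤ glue q r + glue q u := by
  unfold glue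
  split_ifs <;> nlinarith

end Glue

section Cone

variable (K : Type*) {M : Type*} [Field K] [LinearOrder K]
  [AddCommGroup M] [Module K M]

def posCone (B : Set M) : Set M :=
  {x | ∃ s : Finset M, ↑s ⊆ B ∧ s.Nonempty ∧ ∃ c : M → K, (∀ b ∈ s, 0 < c b) ∧
    x = ∑ b ∈ s, c b • b}

def posRay (b : M) : Set M := (· • b) '' Ioi (0 : K)

variable {K} {B : Set M} {x y b : M}

theorem mem_posCone_iff : x ∈ posCone K B ↔ ∃ l : M →₀ K, l ∈ Finsupp.supported K K B ∧
    (∀ a, 0 ≤ l a) ∧ l ≠ 0 ∧ Finsupp.linearCombination K id l = x := by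
  classical
  constructor
  · rintro ⟨s, hsB, ⟨a, ha⟩, c, hc, rfl⟩
    have hsupp : ∀ a, (if a ∈ s then c a else 0) ≠ 0 → a ∈ s := fun a h =>
      by_contra fun has => h (if_neg has)
    refine ⟨Finsupp.onFinset s _ hsupp, ?_, fun a => ?_, ?_, ?_⟩
    · exact (Finsupp.mem_supported K _).mpr
        ((Finset.coe_subset.mpr Finsupp.support_onFinset_subset).trans hsB)
    · simp only [Finsupp.onFinset_apply]
      split_ifs with has
      exacts [(hc a has).le, le_rfl]
    · exact DFunLike.ne_iff.mpr ⟨a, by simp [ha, (hc a ha).ne']⟩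
    · rw [Finsupp.linearCombination_onFinset]
      exact Finset.sum_congr rfl fun a ha => by simp [ha]
  · rintro ⟨l, hlB, hl0, hl, rfl⟩
    refine ⟨l.support, (Finsupp.mem_supported K l).mp hlB, Finsupp.support_nonempty_iff.mpr hl,
      l, fun a ha => (hl0 a).lt_of_ne' (Finsupp.mem_support_iff.mp ha), ?_⟩
    simp [Finsupp.linearCombination_apply, Finsupp.sum]

theorem add_mem_posCone [IsStrictOrderedRing K] (hx : x ∈ posCone K B) (hy : y ∈ posCone K B) :
    x + y ∈ posCone K B := by
  obtain ⟨l, hlB, hl0, hl, rfl⟩ := mem_posCone_iff.mp hx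
  obtain ⟨l', hl'B, hl'0, -, rfl⟩ := mem_posCone_iff.mp hy
  obtain ⟨a, ha⟩ := DFunLike.ne_iff.mp hl
  refine mem_posCone_iff.mpr ⟨l + l', add_mem hlB hl'B, fun a => add_nonneg (hl0 a) (hl'0 a),
    DFunLike.ne_iff.mpr ⟨a, ?_⟩, map_add _ _ _⟩
  simpa using (add_pos_of_pos_of_nonneg ((hl0 a).lt_of_ne' ha) (hl'0 a)).ne'

theorem posRay_subset_posCone (hb : b ∈ B) : posRay K b ⊆ posCone K B := by
  rintro _ ⟨r, hr, rfl⟩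
  exact ⟨{b}, by simpa using hb, Finset.singleton_nonempty b, fun _ => r, by simpa using hr,
    by simp⟩

/-- Coordinates of cone elements are nonnegative, so a summand of an element of `posRay K b`
cannot have any coordinate outside `b`. -/
theorem mem_posRay_of_add_mem_posRay [IsStrictOrderedRing K] (hB : LinearIndepOn K id B)
    (hb : b ∈ B) (hx : x ∈ posCone K B) (hy : y ∈ posCone K B) (hxy : x + y ∈ posRay K b) :
    x ∈ posRay K b := by
  obtain ⟨l, hlB, hl0, hl, rfl⟩ := mem_posCone_iff.mp hx
  obtain ⟨l', hl'B, hl'0, -, rfl⟩ := mem_posCone_iff.mp hy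
  obtain ⟨r, -, hr⟩ := hxy
  have hsum : l + l' = Finsupp.single b r := by
    refine sub_eq_zero.mp (linearIndepOn_iff.mp hB _
      (sub_mem (add_mem hlB hl'B) (Finsupp.single_mem_supported K r hb)) ?_)
    simp [hr]
  have hl_single : l = Finsupp.single b (l b) := by
    refine Finsupp.eq_single_iff.mpr ⟨fun a ha => ?_, rfl⟩
    by_contra hab
    have := DFunLike.congr_fun hsum a
    rw [Finsupp.add_apply, Finsupp.single_eq_of_ne (Finset.mem_singleton.not.mp hab)] at this
    exact Finsupp.mem_support_iff.mp ha (by linarith [hl0 a, hl'0 a])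
  have hlb : l b ≠ 0 := fun h => hl (by rw [hl_single, h, Finsupp.single_zero])
  exact ⟨l b, (hl0 b).lt_of_ne' hlb, by rw [hl_single]; simp⟩

theorem LinearIndependent.pairwise_disjoint_posRay {ι : Type*} {b : ι → M}
    (hb : LinearIndependent K b) : Pairwise (Disjoint on fun i => posRay K (b i)) := by
  refine fun i j hij => disjoint_left.mpr ?_
  rintro _ ⟨r, hr, rfl⟩ ⟨u, -, hru⟩
  exact hij (hb.eq_of_smul_apply_eq_smul_apply r u i j (ne_of_gt hr) hru.symm)

end Cone

section GluedMap

variable {K M ι : Type*} [Field K] [LinearOrder K] [IsStrictOrderedRing K]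
  [AddCommGroup M] [Module K M] {B : Set M} {b : ι → M} {q : ι → K} {f : M → M}

theorem bijOn_posCone_of_glue (hb : LinearIndependent K b) (hbB : ∀ i, b i ∈ B)
    (hq : ∀ i, 0 < q i) (hf_ray : ∀ i, ∀ r : K, 0 < r → f (r • b i) = glue (q i) r • b i)
    (hf_id : ∀ x ∈ posCone K B, x ∉ ⋃ i, posRay K (b i) → f x = x) :
    BijOn f (posCone K B) (posCone K B) := by
  have hray : ∀ i, BijOn f (posRay K (b i)) (posRay K (b i)) := fun i =>
    (bijOn_glue (hq i)).image_of_eqOn_comp (smul_left_injective K (hb.ne_zero i)).injOn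
      fun r hr => hf_ray i r hr
  exact (bijOn_iUnion_of_pairwise_disjoint hb.pairwise_disjoint_posRay hray).of_eqOn_id_diff
    (iUnion_subset fun i => posRay_subset_posCone (hbB i)) fun x hx => hf_id x hx.1 hx.2

variable [PartialOrder M] [IsOrderedAddMonoid M] [PosSMulMono K M]

theorem le_apply_of_glue (hq : ∀ i, 1 ≤ q i) (hb0 : ∀ i, 0 ≤ b i)
    (hf_ray : ∀ i, ∀ r : K, 0 < r → f (r • b i) = glue (q i) r • b i)
    (hf_id : ∀ x ∈ posCone K B, x ∉ ⋃ i, posRay K (b i) → f x = x) {x : M}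
    (hx : x ∈ posCone K B) : x ≤ f x := by
  by_cases hxP : x ∈ ⋃ i, posRay K (b i)
  · obtain ⟨i, r, hr, rfl⟩ := mem_iUnion.mp hxP
    rw [hf_ray i r hr]
    exact smul_le_smul_of_nonneg_right (le_glue (hq i) hr.le) (hb0 i)
  · exact (hf_id x hx hxP).ge

theorem apply_add_le_of_glue (hB : LinearIndepOn K id B) (hbB : ∀ i, b i ∈ B)
    (hq : ∀ i, 1 ≤ q i) (hb0 : ∀ i, 0 ≤ b i)
    (hf_ray : ∀ i, ∀ r : K, 0 < r → f (r • b i) = glue (q i) r • b i)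
    (hf_id : ∀ x ∈ posCone K B, x ∉ ⋃ i, posRay K (b i) → f x = x) {x y : M}
    (hx : x ∈ posCone K B) (hy : y ∈ posCone K B) : f (x + y) ≤ f x + f y := by
  by_cases hxyP : x + y ∈ ⋃ i, posRay K (b i)
  · obtain ⟨i, hxy⟩ := mem_iUnion.mp hxyP
    obtain ⟨r, hr, rfl⟩ := mem_posRay_of_add_mem_posRay hB (hbB i) hx hy hxy
    obtain ⟨u, hu, rfl⟩ :=
      mem_posRay_of_add_mem_posRay hB (hbB i) hy hx (add_comm (r • b i) _ ▸ hxy)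
    rw [← add_smul, hf_ray i _ (add_pos hr hu), hf_ray i r hr, hf_ray i u hu, ← add_smul]
    exact smul_le_smul_of_nonneg_right (glue_add_le (hq i) hr.le hu.le) (hb0 i)
  · rw [hf_id _ (add_mem_posCone hx hy) hxyP]
    exact add_le_add (le_apply_of_glue hq hb0 hf_ray hf_id hx)
      (le_apply_of_glue hq hb0 hf_ray hf_id hy)

end GluedMap

theorem one_lt_of_one_sub_two_zpow_lt_mul {n : ℕ} (hn : 1 ≤ n) {p q : ℝ} (hp : 0 < p)
    (hpn : p < 2 ^ (-(n : ℤ))) (hpq : 1 - 2 ^ (-(n : ℤ)) < p * q) : 1 < q := by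
  have h2 : (2 : ℝ) ^ (-(n : ℤ)) ≤ 2 ^ (-1 : ℤ) := zpow_le_zpow_right₀ one_le_two (by omega)
  rw [zpow_neg_one] at h2
  exact lt_of_mul_lt_mul_left (by linarith : p * 1 < p * q) hp.le

theorem eq_glue_smul {f : ℝ → ℝ} {p : ℝ} {q : ℚ} (hp : 0 < p)
    (hf : ∀ x ∈ posRay ℚ p, (x ≤ p → f x = q * x) ∧ (p < x → f x = x + p * (q - 1)))
    {r : ℚ} (hr : 0 < r) : f (r • p) = glue q r • p := by
  obtain ⟨hle, hlt⟩ := hf (r • p) ⟨r, hr, rfl⟩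
  simp only [Rat.smul_def] at hle hlt ⊢
  unfold glue
  split_ifs with hr1
  · rw [hle (mul_le_of_le_one_left hp.le (by exact_mod_cast hr1))]
    push_cast
    ring
  · rw [hlt (lt_mul_of_one_lt_left hp (by exact_mod_cast not_le.mp hr1))]
    push_cast
    ring

theorem glued_map_subadditive_bijection_general
    (B : Set ℝ)
    (hBind : LinearIndependent ℚ ((↑) : B → ℝ))
    (p : ℕ → ℝ) (hpB : ∀ n : ℕ, 1 ≤ n → p n ∈ B)
    (hpind : LinearIndependent ℚ (fun n : {n : ℕ // 1 ≤ n} => p n))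
    (hp : ∀ n : ℕ, 1 ≤ n → 0 < p n ∧ p n < (2 : ℝ) ^ (-(n : ℤ)))
    (q : ℕ → ℚ) (hq : ∀ n : ℕ, 1 ≤ n →
      1 - (2 : ℝ) ^ (-(n : ℤ)) < p n * (q n : ℝ) ∧ p n * (q n : ℝ) < 1)
    (Pn : ℕ → Set ℝ)
    (hPn : ∀ n : ℕ, Pn n = {x : ℝ | ∃ r : ℚ, 0 < r ∧ x = (r : ℝ) * p n})
    (P : Set ℝ) (hPdef : P = ⋃ n ∈ {n : ℕ | 1 ≤ n}, Pn n)
    (H : Set ℝ)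
    (hH : H = {x : ℝ | ∃ s : Finset ℝ, ↑s ⊆ B ∧ s.Nonempty ∧
      ∃ c : ℝ → ℚ, (∀ b ∈ s, 0 < c b) ∧ x = ∑ b ∈ s, (c b : ℝ) * b})
    (f : ℝ → ℝ)
    (hfPn : ∀ n : ℕ, 1 ≤ n → ∀ x ∈ Pn n,
      (x ≤ p n → f x = (q n : ℝ) * x) ∧ (p n < x → f x = x + p n * ((q n : ℝ) - 1)))
    (hfid : ∀ x ∈ H, x ∉ P → f x = x) :
    Set.BijOn f H H ∧ ∀ x ∈ H, ∀ y ∈ H, f (x + y) ≤ f x + f y := by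
  have hPn' : ∀ n, Pn n = posRay ℚ (p n) := fun n => by
    ext x
    simp [hPn n, posRay, Rat.smul_def, eq_comm]
  have hH' : H = posCone ℚ B := by
    ext x
    simp [hH, posCone, Rat.smul_def]
  have hP : P = ⋃ i : {n : ℕ // 1 ≤ n}, posRay ℚ (p i) := by
    rw [hPdef, biUnion_eq_iUnion]
    simp only [hPn']
    rfl
  have hq1 : ∀ i : {n : ℕ // 1 ≤ n}, 1 < q i := fun i => by
    exact_mod_cast one_lt_of_one_sub_two_zpow_lt_mul i.2 (hp i i.2).1 (hp i i.2).2 (hq i i.2).1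
  have hf_ray : ∀ i : {n : ℕ // 1 ≤ n}, ∀ r : ℚ, 0 < r → f (r • p i) = glue (q i) r • p i :=
    fun i r hr => eq_glue_smul (hp i i.2).1 (hPn' i ▸ hfPn i i.2) hr
  subst hH' hP
  have hpB' : ∀ i : {n : ℕ // 1 ≤ n}, p i ∈ B := fun i => hpB i i.2
  exact ⟨bijOn_posCone_of_glue hpind hpB' (fun i => one_pos.trans (hq1 i)) hf_ray hfid,
    fun x hx y hy => apply_add_le_of_glue hBind hpB' (fun i => (hq1 i).le)
      (fun i => (hp i i.2).1.le) hf_ray hfid hx hy⟩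

theorem glued_map_subadditive_bijection
    (B : Set ℝ) (hB : B ⊆ Set.Ioi 0)
    (hBind : LinearIndependent ℚ ((↑) : B → ℝ))
    (p : ℕ → ℝ) (hpB : ∀ n : ℕ, 1 ≤ n → p n ∈ B)
    (hpind : LinearIndependent ℚ (fun n : {n : ℕ // 1 ≤ n} => p n))
    (hp : ∀ n : ℕ, 1 ≤ n → 0 < p n ∧ p n < (2 : ℝ) ^ (-(n : ℤ)))
    (q : ℕ → ℚ) (hq : ∀ n : ℕ, 1 ≤ n →
      1 - (2 : ℝ) ^ (-(n : ℤ)) < p n * (q n : ℝ) ∧ p n * (q n : ℝ) < 1)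
    (Pn : ℕ → Set ℝ)
    (hPn : ∀ n : ℕ, Pn n = {x : ℝ | ∃ r : ℚ, 0 < r ∧ x = (r : ℝ) * p n})
    (P : Set ℝ) (hPdef : P = ⋃ n ∈ {n : ℕ | 1 ≤ n}, Pn n)
    (H : Set ℝ)
    (hH : H = {x : ℝ | ∃ s : Finset ℝ, ↑s ⊆ B ∧ s.Nonempty ∧
      ∃ c : ℝ → ℚ, (∀ b ∈ s, 0 < c b) ∧ x = ∑ b ∈ s, (c b : ℝ) * b})
    (f : ℝ → ℝ)
    (hfPn : ∀ n : ℕ, 1 ≤ n → ∀ x ∈ Pn n,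
      (x ≤ p n → f x = (q n : ℝ) * x) ∧ (p n < x → f x = x + p n * ((q n : ℝ) - 1)))
    (hfid : ∀ x ∈ H, x ∉ P → f x = x) :
    Set.BijOn f H H ∧ ∀ x ∈ H, ∀ y ∈ H, f (x + y) ≤ f x + f y :=
  glued_map_subadditive_bijection_general B hBind p hpB hpind hp q hq Pn hPn P hPdef H hH f hfPn
    hfid
end
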